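/- arXiv:hep-th/0606198 — 3 statements merged into one kernel-verified Lean document; each statement's English description precedes it below -/
import Mathlib

section
/- Define the Labastida operator $\mathsf{F} = \Box - d_i d_i^\dagger + \tfrac12 d_i d_j \mathrm{Tr}_{ij}$ (implicit summation over repeated Latin indices from $1$ to $s$, with $\mathrm{Tr}_{ii}:=0$). Then the generalized Damour–Deser identity holds: for any multiform $\phi \in \Omega^{\ell_1,\dots,\ell_s}_{[s]}(\mathbb{R}^D)$, $\mathrm{Tr}_{12}(d_1 d_2 \cdots d_s\,\phi) = d_3 d_4 \cdots d_s (\mathsf{F}\phi)$. -/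
namespace Stmt9

/-- exterior derivative `dᵢ = θᵢ^μ ∂_μ` -/
def dOp {R : Type*} [Ring R] {D s : ℕ}
    (θ : Fin s → Fin D → R) (der : Fin D → R) (i : Fin s) : R :=
  ∑ μ : Fin D, θ i μ * der μ

/-- coderivative `dᵢ† = θ̄ᵢ^μ ∂_μ` -/
def ddOp {R : Type*} [Ring R] {D s : ℕ}
    (θb : Fin s → Fin D → R) (der : Fin D → R) (i : Fin s) : R :=
  ∑ μ : Fin D, θb i μ * der μ

/-- trace operator `Tr_{ij} = η_{μν} θ̄ᵢ^μ θ̄ⱼ^ν` -/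
def trOp {R : Type*} [Ring R] [Algebra ℝ R] {D s : ℕ}
    (ηlow : Fin D → Fin D → ℝ) (θb : Fin s → Fin D → R) (i j : Fin s) : R :=
  ∑ μ : Fin D, ∑ ν : Fin D, ηlow μ ν • (θb i μ * θb j ν)

/-- trace operator extended by `Tr_{ii} := 0` -/
def trOp' {R : Type*} [Ring R] [Algebra ℝ R] {D s : ℕ}
    (ηlow : Fin D → Fin D → ℝ) (θb : Fin s → Fin D → R) (i j : Fin s) : R :=
  if i = j then 0 else trOp ηlow θb i j

/-- d'Alembertian `□ = η^{μν} ∂_μ ∂_ν` -/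
def boxOp {R : Type*} [Ring R] [Algebra ℝ R] {D : ℕ}
    (ηup : Fin D → Fin D → ℝ) (der : Fin D → R) : R :=
  ∑ μ : Fin D, ∑ ν : Fin D, ηup μ ν • (der μ * der ν)

/-- Labastida operator `𝖥 = □ − dᵢ dᵢ† + ½ dᵢ dⱼ Tr_{ij}` (implicit sums, `Tr_{ii} := 0`). -/
noncomputable def labOp {R : Type*} [Ring R] [Algebra ℝ R] {D s : ℕ}
    (ηup ηlow : Fin D → Fin D → ℝ) (θ θb : Fin s → Fin D → R) (der : Fin D → R) : R :=
  boxOp ηup der - (∑ i : Fin s, dOp θ der i * ddOp θb der i)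
    + (2 : ℝ)⁻¹ • (∑ i : Fin s, ∑ j : Fin s, dOp θ der i * dOp θ der j * trOp' ηlow θb i j)

lemma contract_left {R : Type*} [Ring R] [Algebra ℝ R] {D : ℕ}
    (c k : Fin D → Fin D → ℝ) (f : Fin D → Fin D → R)
    (h : ∀ a ν, (∑ μ : Fin D, c μ ν * k a μ) = if a = ν then 1 else 0) :
    (∑ μ : Fin D, ∑ ν : Fin D, c μ ν • (∑ a : Fin D, k a μ • f a ν))
      = ∑ ν : Fin D, f ν ν := by
  calc (∑ μ : Fin D, ∑ ν : Fin D, c μ ν • (∑ a : Fin D, k a μ • f a ν))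
      = ∑ μ : Fin D, ∑ ν : Fin D, ∑ a : Fin D, (c μ ν * k a μ) • f a ν := by
        simp only [Finset.smul_sum, smul_smul]
    _ = ∑ ν : Fin D, ∑ a : Fin D, (∑ μ : Fin D, c μ ν * k a μ) • f a ν := by
        rw [Finset.sum_comm]
        exact Finset.sum_congr rfl fun ν _ => by
          rw [Finset.sum_comm]
          exact Finset.sum_congr rfl fun a _ => (Finset.sum_smul).symm
    _ = ∑ ν : Fin D, f ν ν := by
        simp [h, ite_smul]

lemma contract_right {R : Type*} [Ring R] [Algebra ℝ R] {D : ℕ}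
    (c k : Fin D → Fin D → ℝ) (f : Fin D → Fin D → R)
    (h : ∀ μ b, (∑ ν : Fin D, c μ ν * k b ν) = if μ = b then 1 else 0) :
    (∑ μ : Fin D, ∑ ν : Fin D, c μ ν • (∑ b : Fin D, k b ν • f μ b))
      = ∑ μ : Fin D, f μ μ := by
  calc (∑ μ : Fin D, ∑ ν : Fin D, c μ ν • (∑ b : Fin D, k b ν • f μ b))
      = ∑ μ : Fin D, ∑ b : Fin D, (∑ ν : Fin D, c μ ν * k b ν) • f μ b := by
        refine Finset.sum_congr rfl fun μ _ => ?_
        calc ∑ ν : Fin D, c μ ν • (∑ b : Fin D, k b ν • f μ b)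
            = ∑ ν : Fin D, ∑ b : Fin D, (c μ ν * k b ν) • f μ b := by
              simp only [Finset.smul_sum, smul_smul]
          _ = ∑ b : Fin D, ∑ ν : Fin D, (c μ ν * k b ν) • f μ b := Finset.sum_comm
          _ = ∑ b : Fin D, (∑ ν : Fin D, c μ ν * k b ν) • f μ b :=
              Finset.sum_congr rfl fun b _ => (Finset.sum_smul).symm
    _ = ∑ μ : Fin D, f μ μ := by
        simp [h, ite_smul]

/-- raised-index derivative `∂^μ = η^{aμ} ∂_a` -/
def eOp {R : Type*} [Ring R] [Algebra ℝ R] {D : ℕ}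
    (ηup : Fin D → Fin D → ℝ) (der : Fin D → R) (μ : Fin D) : R :=
  ∑ a : Fin D, ηup a μ • der a

section
variable {R : Type*} [Ring R] [Algebra ℝ R] {D s : ℕ}
  (ηup ηlow : Fin D → Fin D → ℝ) (θ θb : Fin s → Fin D → R) (der : Fin D → R)

lemma sum_ee
    (hη_symm : ∀ μ ν, ηup μ ν = ηup ν μ)
    (hη_inv : ∀ μ ν, (∑ lam : Fin D, ηup μ lam * ηlow lam ν) = if μ = ν then 1 else 0) :
    (∑ μ : Fin D, ∑ ν : Fin D, ηlow μ ν • (eOp ηup der μ * eOp ηup der ν))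
      = boxOp ηup der := by
  have hcl : ∀ a ν, (∑ μ : Fin D, ηlow μ ν * ηup a μ) = if a = ν then 1 else 0 := by
    intro a ν
    rw [Finset.sum_congr rfl fun μ _ => mul_comm (ηlow μ ν) (ηup a μ)]
    exact hη_inv a ν
  have expand : ∀ μ ν : Fin D,
      eOp ηup der μ * eOp ηup der ν = ∑ a : Fin D, ηup a μ • (der a * eOp ηup der ν) := by
    intro μ ν
    rw [eOp, Finset.sum_mul]
    exact Finset.sum_congr rfl fun a _ => smul_mul_assoc _ _ _
  rw [Finset.sum_congr rfl fun μ _ => Finset.sum_congr rfl fun ν _ => by rw [expand μ ν]]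
  rw [contract_left ηlow ηup _ hcl, boxOp]
  refine Finset.sum_congr rfl fun ν _ => ?_
  rw [eOp, Finset.mul_sum]
  exact Finset.sum_congr rfl fun b _ => by rw [mul_smul_comm, hη_symm b ν]

lemma sum_b_e (i : Fin s)
    (hη_symm : ∀ μ ν, ηup μ ν = ηup ν μ)
    (hη_inv' : ∀ μ ν, (∑ lam : Fin D, ηlow μ lam * ηup lam ν) = if μ = ν then 1 else 0) :
    (∑ μ : Fin D, ∑ ν : Fin D, ηlow μ ν • (θb i μ * eOp ηup der ν))
      = ddOp θb der i := by
  have hcr : ∀ μ b, (∑ ν : Fin D, ηlow μ ν * ηup b ν) = if μ = b then 1 else 0 := by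
    intro μ b
    rw [Finset.sum_congr rfl fun ν _ => by rw [hη_symm b ν]]
    exact hη_inv' μ b
  have expand : ∀ μ ν : Fin D,
      θb i μ * eOp ηup der ν = ∑ b : Fin D, ηup b ν • (θb i μ * der b) := by
    intro μ ν
    rw [eOp, Finset.mul_sum]
    exact Finset.sum_congr rfl fun b _ => mul_smul_comm _ _ _
  rw [Finset.sum_congr rfl fun μ _ => Finset.sum_congr rfl fun ν _ => by rw [expand μ ν]]
  rw [contract_right ηlow ηup _ hcr, ddOp]

lemma sum_e_b (i : Fin s)
    (hη_inv : ∀ μ ν, (∑ lam : Fin D, ηup μ lam * ηlow lam ν) = if μ = ν then 1 else 0)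
    (h_der_θb : ∀ (μ ν : Fin D), der μ * θb i ν = θb i ν * der μ) :
    (∑ μ : Fin D, ∑ ν : Fin D, ηlow μ ν • (eOp ηup der μ * θb i ν))
      = ddOp θb der i := by
  have hcl : ∀ a ν, (∑ μ : Fin D, ηlow μ ν * ηup a μ) = if a = ν then 1 else 0 := by
    intro a ν
    rw [Finset.sum_congr rfl fun μ _ => mul_comm (ηlow μ ν) (ηup a μ)]
    exact hη_inv a ν
  have expand : ∀ μ ν : Fin D,
      eOp ηup der μ * θb i ν = ∑ a : Fin D, ηup a μ • (der a * θb i ν) := by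
    intro μ ν
    rw [eOp, Finset.sum_mul]
    exact Finset.sum_congr rfl fun a _ => smul_mul_assoc _ _ _
  rw [Finset.sum_congr rfl fun μ _ => Finset.sum_congr rfl fun ν _ => by rw [expand μ ν]]
  rw [contract_left ηlow ηup _ hcl, ddOp]
  exact Finset.sum_congr rfl fun ν _ => h_der_θb ν ν

end

section
variable {R : Type*} [Ring R] [Algebra ℝ R] {D s : ℕ}

lemma commute_dOp (θ : Fin s → Fin D → R) (der : Fin D → R) (i : Fin s) (x : R)
    (h1 : ∀ a, Commute x (θ i a)) (h2 : ∀ a, Commute x (der a)) :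
    Commute x (dOp θ der i) :=
  Commute.sum_right _ _ _ fun a _ => (h1 a).mul_right (h2 a)

lemma commute_ddOp (θb : Fin s → Fin D → R) (der : Fin D → R) (i : Fin s) (x : R)
    (h1 : ∀ a, Commute x (θb i a)) (h2 : ∀ a, Commute x (der a)) :
    Commute x (ddOp θb der i) :=
  Commute.sum_right _ _ _ fun a _ => (h1 a).mul_right (h2 a)

lemma commute_trOp (ηlow : Fin D → Fin D → ℝ) (θb : Fin s → Fin D → R) (i j : Fin s) (x : R)
    (h1 : ∀ a, Commute x (θb i a)) (h2 : ∀ a, Commute x (θb j a)) :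
    Commute x (trOp ηlow θb i j) :=
  Commute.sum_right _ _ _ fun μ _ => Commute.sum_right _ _ _ fun ν _ =>
    (((h1 μ).mul_right (h2 ν)).smul_right _)

lemma commute_boxOp (ηup : Fin D → Fin D → ℝ) (der : Fin D → R) (x : R)
    (h2 : ∀ a, Commute x (der a)) :
    Commute x (boxOp ηup der) :=
  Commute.sum_right _ _ _ fun μ _ => Commute.sum_right _ _ _ fun ν _ =>
    (((h2 μ).mul_right (h2 ν)).smul_right _)

lemma commute_eOp (ηup : Fin D → Fin D → ℝ) (der : Fin D → R) (μ : Fin D) (x : R)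
    (h2 : ∀ a, Commute x (der a)) :
    Commute x (eOp ηup der μ) :=
  Commute.sum_right _ _ _ fun a _ => (h2 a).smul_right _

lemma key_comm
    (ηup ηlow : Fin D → Fin D → ℝ)
    (hη_symm : ∀ μ ν, ηup μ ν = ηup ν μ)
    (hη_inv : ∀ μ ν, (∑ lam : Fin D, ηup μ lam * ηlow lam ν) = if μ = ν then 1 else 0)
    (hη_inv' : ∀ μ ν, (∑ lam : Fin D, ηlow μ lam * ηup lam ν) = if μ = ν then 1 else 0)
    (θ θb : Fin s → Fin D → R) (der : Fin D → R)
    (h_mixed_same : ∀ (i : Fin s) (μ ν : Fin D),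
      θ i μ * θb i ν + θb i ν * θ i μ = algebraMap ℝ R (ηup μ ν))
    (h_mixed_diff : ∀ (i j : Fin s), i ≠ j → ∀ (μ ν : Fin D),
      θ i μ * θb j ν = θb j ν * θ i μ)
    (h_der_comm : ∀ μ ν, der μ * der ν = der ν * der μ)
    (h_der_θ : ∀ (i : Fin s) (μ ν : Fin D), der μ * θ i ν = θ i ν * der μ)
    (h_der_θb : ∀ (i : Fin s) (μ ν : Fin D), der μ * θb i ν = θb i ν * der μ)
    (i0 i1 : Fin s) (hne : i0 ≠ i1) :
    trOp ηlow θb i0 i1 * (dOp θ der i0 * dOp θ der i1)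
      = dOp θ der i0 * (dOp θ der i1 * trOp ηlow θb i0 i1) + boxOp ηup der
        - dOp θ der i0 * ddOp θb der i0 - dOp θ der i1 * ddOp θb der i1 := by
  have hbd : ∀ (i : Fin s) (μ : Fin D),
      θb i μ * dOp θ der i = eOp ηup der μ - dOp θ der i * θb i μ := by
    intro i μ
    have e1 : ∀ a : Fin D, θb i μ * (θ i a * der a)
        = ηup a μ • der a - θ i a * der a * θb i μ := by
      intro a
      have h : θb i μ * θ i a = algebraMap ℝ R (ηup a μ) - θ i a * θb i μ :=
        eq_sub_of_add_eq' (h_mixed_same i a μ)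
      rw [← mul_assoc, h, sub_mul, ← Algebra.smul_def]
      congr 1
      rw [mul_assoc, ← h_der_θb i a μ, ← mul_assoc]
    rw [dOp, Finset.mul_sum, Finset.sum_congr rfl fun a _ => e1 a,
      Finset.sum_sub_distrib, ← Finset.sum_mul]
    rfl
  have cbd0 : ∀ ν, θb i1 ν * dOp θ der i0 = dOp θ der i0 * θb i1 ν := by
    intro ν
    exact (commute_dOp θ der i0 (θb i1 ν)
      (fun a => ((h_mixed_diff i0 i1 hne a ν : Commute (θ i0 a) (θb i1 ν)).symm))
      (fun a => ((h_der_θb i1 a ν : Commute (der a) (θb i1 ν)).symm))).eq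
  have cbd1 : ∀ μ, θb i0 μ * dOp θ der i1 = dOp θ der i1 * θb i0 μ := by
    intro μ
    exact (commute_dOp θ der i1 (θb i0 μ)
      (fun a => ((h_mixed_diff i1 i0 hne.symm a μ : Commute (θ i1 a) (θb i0 μ)).symm))
      (fun a => ((h_der_θb i0 a μ : Commute (der a) (θb i0 μ)).symm))).eq
  have ced : ∀ (μ : Fin D) (j : Fin s), eOp ηup der μ * dOp θ der j = dOp θ der j * eOp ηup der μ := by
    intro μ j
    exact (commute_dOp θ der j (eOp ηup der μ)
      (fun a => (commute_eOp ηup der μ (θ j a)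
        (fun b => ((h_der_θ j b a : Commute (der b) (θ j a)).symm))).symm)
      (fun a => (commute_eOp ηup der μ (der a)
        (fun b => ((h_der_comm b a : Commute (der b) (der a)).symm))).symm)).eq
  have h1 : ∀ ν, θb i1 ν * (dOp θ der i0 * dOp θ der i1)
      = dOp θ der i0 * eOp ηup der ν - dOp θ der i0 * (dOp θ der i1 * θb i1 ν) := by
    intro ν
    rw [← mul_assoc, cbd0 ν, mul_assoc, hbd i1 ν, mul_sub]
  have hpt : ∀ μ ν : Fin D, (θb i0 μ * θb i1 ν) * (dOp θ der i0 * dOp θ der i1)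
      = eOp ηup der μ * eOp ηup der ν
        - dOp θ der i0 * (θb i0 μ * eOp ηup der ν)
        - dOp θ der i1 * (eOp ηup der μ * θb i1 ν)
        + dOp θ der i0 * (dOp θ der i1 * (θb i0 μ * θb i1 ν)) := by
    intro μ ν
    rw [mul_assoc, h1 ν, mul_sub]
    have hA : θb i0 μ * (dOp θ der i0 * eOp ηup der ν)
        = eOp ηup der μ * eOp ηup der ν - dOp θ der i0 * (θb i0 μ * eOp ηup der ν) := by
      rw [← mul_assoc, hbd i0 μ, sub_mul, mul_assoc]
    have hB : θb i0 μ * (dOp θ der i0 * (dOp θ der i1 * θb i1 ν))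
        = dOp θ der i1 * (eOp ηup der μ * θb i1 ν)
          - dOp θ der i0 * (dOp θ der i1 * (θb i0 μ * θb i1 ν)) := by
      rw [← mul_assoc, hbd i0 μ, sub_mul]
      congr 1
      · rw [← mul_assoc, ced μ i1, mul_assoc]
      · rw [mul_assoc]
        congr 1
        rw [← mul_assoc, cbd1 μ, mul_assoc]
    rw [hA, hB]
    abel
  have stepA : trOp ηlow θb i0 i1 * (dOp θ der i0 * dOp θ der i1)
      = ∑ μ : Fin D, ∑ ν : Fin D,
          ηlow μ ν • ((θb i0 μ * θb i1 ν) * (dOp θ der i0 * dOp θ der i1)) := by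
    rw [trOp, Finset.sum_mul]
    exact Finset.sum_congr rfl fun μ _ => by
      rw [Finset.sum_mul]
      exact Finset.sum_congr rfl fun ν _ => smul_mul_assoc _ _ _
  rw [stepA,
    Finset.sum_congr rfl fun μ _ => Finset.sum_congr rfl fun ν _ => by rw [hpt μ ν]]
  simp only [smul_sub, smul_add, Finset.sum_sub_distrib, Finset.sum_add_distrib]
  have p2 : (∑ μ : Fin D, ∑ ν : Fin D, ηlow μ ν • (dOp θ der i0 * (θb i0 μ * eOp ηup der ν)))
      = dOp θ der i0 * ∑ μ : Fin D, ∑ ν : Fin D, ηlow μ ν • (θb i0 μ * eOp ηup der ν) := by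
    simp only [Finset.mul_sum, mul_smul_comm]
  have p3 : (∑ μ : Fin D, ∑ ν : Fin D, ηlow μ ν • (dOp θ der i1 * (eOp ηup der μ * θb i1 ν)))
      = dOp θ der i1 * ∑ μ : Fin D, ∑ ν : Fin D, ηlow μ ν • (eOp ηup der μ * θb i1 ν) := by
    simp only [Finset.mul_sum, mul_smul_comm]
  have p4 : (∑ μ : Fin D, ∑ ν : Fin D,
        ηlow μ ν • (dOp θ der i0 * (dOp θ der i1 * (θb i0 μ * θb i1 ν))))
      = dOp θ der i0 * (dOp θ der i1 * trOp ηlow θb i0 i1) := by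
    rw [trOp]
    simp only [Finset.mul_sum, mul_smul_comm]
  rw [p2, p3, p4, sum_ee ηup ηlow der hη_symm hη_inv,
    sum_b_e ηup ηlow θb der i0 hη_symm hη_inv',
    sum_e_b ηup ηlow θb der i1 hη_inv (h_der_θb i1)]
  abel

end

section
variable {R : Type*} [Ring R] [Algebra ℝ R] {D s : ℕ}

lemma tr_symm (ηlow : Fin D → Fin D → ℝ) (θb : Fin s → Fin D → R)
    (hlow_symm : ∀ μ ν, ηlow μ ν = ηlow ν μ)
    (i j : Fin s) (hij : i ≠ j)
    (h_θbθb_diff : ∀ (μ ν : Fin D), θb i μ * θb j ν = θb j ν * θb i μ) :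
    trOp ηlow θb i j = trOp ηlow θb j i := by
  rw [trOp, trOp, Finset.sum_comm]
  refine Finset.sum_congr rfl fun μ _ => Finset.sum_congr rfl fun ν _ => ?_
  rw [hlow_symm ν μ, h_θbθb_diff ν μ]

lemma prod_mul_eq_zero {M : List R} {x : R}
    (hx : x ∈ M) (hc : ∀ y ∈ M, Commute x y) (h0 : x * x = 0) :
    M.prod * x = 0 := by
  induction M with
  | nil => cases hx
  | cons a t ih =>
    rw [List.prod_cons]
    rcases List.mem_cons.mp hx with h | h
    · subst h
      have hct : Commute x t.prod :=
        Commute.list_prod_right _ _ fun y hy => hc y (List.mem_cons_of_mem _ hy)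
      rw [mul_assoc, ← hct.eq, ← mul_assoc, h0, zero_mul]
    · rw [mul_assoc, ih h (fun y hy => hc y (List.mem_cons_of_mem _ hy)), mul_zero]

lemma d_sq (θ : Fin s → Fin D → R) (der : Fin D → R) (i : Fin s)
    (h_θθ_same : ∀ (μ ν : Fin D), θ i μ * θ i ν = -(θ i ν * θ i μ))
    (h_der_comm : ∀ μ ν, der μ * der ν = der ν * der μ)
    (h_der_θ : ∀ (μ ν : Fin D), der μ * θ i ν = θ i ν * der μ) :
    dOp θ der i * dOp θ der i = 0 := by
  rw [dOp, Finset.sum_mul_sum]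
  set S := ∑ μ : Fin D, ∑ ν : Fin D, (θ i μ * der μ) * (θ i ν * der ν) with hS
  have key : ∀ μ ν : Fin D,
      (θ i μ * der μ) * (θ i ν * der ν) = -((θ i ν * der ν) * (θ i μ * der μ)) := by
    intro μ ν
    have e1 : (θ i μ * der μ) * (θ i ν * der ν) = (θ i μ * θ i ν) * (der μ * der ν) := by
      rw [mul_assoc, ← mul_assoc (der μ), h_der_θ, mul_assoc, ← mul_assoc, ← mul_assoc]
    have e2 : (θ i ν * der ν) * (θ i μ * der μ) = (θ i ν * θ i μ) * (der ν * der μ) := by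
      rw [mul_assoc, ← mul_assoc (der ν), h_der_θ, mul_assoc, ← mul_assoc, ← mul_assoc]
    rw [e1, e2, h_θθ_same, h_der_comm μ ν, neg_mul]
  have hSS : S = -S := by
    calc S = ∑ μ : Fin D, ∑ ν : Fin D, -((θ i ν * der ν) * (θ i μ * der μ)) :=
          Finset.sum_congr rfl fun μ _ => Finset.sum_congr rfl fun ν _ => key μ ν
      _ = -∑ μ : Fin D, ∑ ν : Fin D, ((θ i ν * der ν) * (θ i μ * der μ)) := by
          simp [Finset.sum_neg_distrib]
      _ = -S := by rw [Finset.sum_comm]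
  have h2 : (2:ℝ) • S = 0 := by
    rw [two_smul]
    nth_rewrite 1 [hSS]
    exact neg_add_cancel S
  calc S = (2⁻¹:ℝ) • ((2:ℝ) • S) := by rw [smul_smul]; norm_num
    _ = 0 := by rw [h2, smul_zero]

end

theorem main_aux
    {R : Type*} [Ring R] [Algebra ℝ R] {D n : ℕ}
    (ηup ηlow : Fin D → Fin D → ℝ)
    (hη_symm : ∀ μ ν, ηup μ ν = ηup ν μ)
    (hη_inv : ∀ μ ν, (∑ lam : Fin D, ηup μ lam * ηlow lam ν) = if μ = ν then 1 else 0)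
    (θ θb : Fin (n + 2) → Fin D → R) (der : Fin D → R)
    (h_mixed_same : ∀ (i : Fin (n + 2)) (μ ν : Fin D),
      θ i μ * θb i ν + θb i ν * θ i μ = algebraMap ℝ R (ηup μ ν))
    (h_mixed_diff : ∀ (i j : Fin (n + 2)), i ≠ j → ∀ (μ ν : Fin D),
      θ i μ * θb j ν = θb j ν * θ i μ)
    (h_θθ_same : ∀ (i : Fin (n + 2)) (μ ν : Fin D), θ i μ * θ i ν = -(θ i ν * θ i μ))
    (h_θθ_diff : ∀ (i j : Fin (n + 2)), i ≠ j → ∀ (μ ν : Fin D), θ i μ * θ j ν = θ j ν * θ i μ)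
    (h_θbθb_diff : ∀ (i j : Fin (n + 2)), i ≠ j → ∀ (μ ν : Fin D),
      θb i μ * θb j ν = θb j ν * θb i μ)
    (h_der_comm : ∀ μ ν, der μ * der ν = der ν * der μ)
    (h_der_θ : ∀ (i : Fin (n + 2)) (μ ν : Fin D), der μ * θ i ν = θ i ν * der μ)
    (h_der_θb : ∀ (i : Fin (n + 2)) (μ ν : Fin D), der μ * θb i ν = θb i ν * der μ)
    (φ : R) (i0 i1 : Fin (n + 2)) (hv0 : i0.val = 0) (hv1 : i1.val = 1) :
    trOp ηlow θb i0 i1 * ((List.ofFn (dOp θ der)).prod * φ)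
      = ((List.ofFn (dOp θ der)).drop 2).prod * (labOp ηup ηlow θ θb der * φ) := by
  -- inverse-metric facts
  have hAB : (Matrix.of ηup) * (Matrix.of ηlow) = 1 := by
    ext μ ν
    simpa [Matrix.mul_apply, Matrix.one_apply] using hη_inv μ ν
  have hBA : (Matrix.of ηlow) * (Matrix.of ηup) = 1 := mul_eq_one_comm.mp hAB
  have hη_inv' : ∀ μ ν, (∑ lam : Fin D, ηlow μ lam * ηup lam ν) = if μ = ν then 1 else 0 := by
    intro μ ν
    have h := congrFun (congrFun hBA μ) ν
    simpa [Matrix.mul_apply, Matrix.one_apply] using h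
  have hA_symm : Matrix.transpose (Matrix.of ηup) = Matrix.of ηup := by
    ext μ ν
    simp only [Matrix.transpose_apply, Matrix.of_apply]
    exact hη_symm ν μ
  have hBsym : Matrix.transpose (Matrix.of ηlow) = Matrix.of ηlow := by
    calc Matrix.transpose (Matrix.of ηlow)
        = Matrix.transpose (Matrix.of ηlow) * ((Matrix.of ηup) * (Matrix.of ηlow)) := by rw [hAB, mul_one]
      _ = (Matrix.transpose (Matrix.of ηlow) * (Matrix.of ηup)) * Matrix.of ηlow :=
          (mul_assoc _ _ _).symm
      _ = Matrix.transpose ((Matrix.of ηup) * (Matrix.of ηlow)) * Matrix.of ηlow := by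
          rw [Matrix.transpose_mul, hA_symm]
      _ = Matrix.of ηlow := by rw [hAB, Matrix.transpose_one, one_mul]
  have hlow_symm : ∀ μ ν, ηlow μ ν = ηlow ν μ := by
    intro μ ν
    have h := congrFun (congrFun hBsym ν) μ
    simpa [Matrix.transpose_apply] using h
  have hne : i0 ≠ i1 := by
    intro h; rw [Fin.ext_iff, hv0, hv1] at h; omega
  -- commutation of distinct d's
  have cdd : ∀ i j : Fin (n + 2), i ≠ j → Commute (dOp θ der i) (dOp θ der j) := by
    intro i j hij
    refine commute_dOp θ der j (dOp θ der i) (fun a => ?_) (fun a => ?_)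
    · exact (commute_dOp θ der i (θ j a)
        (fun b => (h_θθ_diff j i hij.symm a b : Commute (θ j a) (θ i b)))
        (fun b => ((h_der_θ j b a : Commute (der b) (θ j a)).symm))).symm
    · exact (commute_dOp θ der i (der a)
        (fun b => (h_der_θ i a b : Commute (der a) (θ i b)))
        (fun b => (h_der_comm a b : Commute (der a) (der b)))).symm
  -- the tail list
  set M : List R := List.ofFn (fun k : Fin n => dOp θ der k.succ.succ) with hM
  have hss_ne : ∀ (k : Fin n) (i : Fin (n + 2)), i.val ≤ 1 → i ≠ k.succ.succ := by
    intro k i hi h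
    rw [Fin.ext_iff] at h
    simp [Fin.val_succ] at h
    omega
  have hL : List.ofFn (dOp θ der) = dOp θ der i0 :: dOp θ der i1 :: M := by
    rw [List.ofFn_succ, List.ofFn_succ, hM]
    have h0 : (0 : Fin (n + 2)) = i0 := by rw [Fin.ext_iff, hv0]; rfl
    have h1 : ((0 : Fin (n + 1))).succ = i1 := by rw [Fin.ext_iff, hv1]; rfl
    rw [h0, h1]
  have hMzero : ∀ i : Fin (n + 2), 2 ≤ i.val → M.prod * dOp θ der i = 0 := by
    intro i hi
    refine prod_mul_eq_zero ?_ ?_ (d_sq θ der i (h_θθ_same i) h_der_comm (h_der_θ i))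
    · rw [hM, List.mem_ofFn]
      refine ⟨⟨i.val - 2, by omega⟩, ?_⟩
      have hix : ((⟨i.val - 2, by omega⟩ : Fin n)).succ.succ = i := by
        rw [Fin.ext_iff]
        simp only [Fin.val_succ]
        omega
      exact congrArg (dOp θ der) hix
    · intro y hy
      rw [hM, List.mem_ofFn] at hy
      obtain ⟨k, rfl⟩ := hy
      by_cases hk : i = k.succ.succ
      · rw [hk]
      · exact cdd i _ hk
  have hMcomm : ∀ x : R, (∀ k : Fin n, Commute x (dOp θ der k.succ.succ)) → Commute x M.prod := by
    intro x h
    refine Commute.list_prod_right _ _ fun y hy => ?_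
    rw [hM, List.mem_ofFn] at hy
    obtain ⟨k, rfl⟩ := hy
    exact h k
  -- commutation with M.prod
  have c_d0M : Commute (dOp θ der i0) M.prod :=
    hMcomm _ fun k => cdd i0 _ (hss_ne k i0 (by omega))
  have c_d1M : Commute (dOp θ der i1) M.prod :=
    hMcomm _ fun k => cdd i1 _ (hss_ne k i1 (by omega))
  have c_TM : Commute (trOp ηlow θb i0 i1) M.prod := by
    refine hMcomm _ fun k => ?_
    refine commute_dOp θ der _ _ (fun a => ?_) (fun a => ?_)
    · exact (commute_trOp ηlow θb i0 i1 (θ k.succ.succ a)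
        (fun b => (h_mixed_diff _ i0 (hss_ne k i0 (by omega)).symm a b))
        (fun b => (h_mixed_diff _ i1 (hss_ne k i1 (by omega)).symm a b))).symm
    · exact (commute_trOp ηlow θb i0 i1 (der a)
        (fun b => ((h_der_θb i0 a b : Commute (der a) (θb i0 b))))
        (fun b => ((h_der_θb i1 a b : Commute (der a) (θb i1 b))))).symm
  have c_boxM : Commute (boxOp ηup der) M.prod := by
    refine hMcomm _ fun k => ?_
    refine commute_dOp θ der _ _ (fun a => ?_) (fun a => ?_)
    · exact (commute_boxOp ηup der (θ k.succ.succ a)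
        (fun b => ((h_der_θ _ b a : Commute (der b) (θ _ a)).symm))).symm
    · exact (commute_boxOp ηup der (der a)
        (fun b => (h_der_comm a b : Commute (der a) (der b)))).symm
  have c_ddM : ∀ i : Fin (n + 2), i.val ≤ 1 → Commute (ddOp θb der i) M.prod := by
    intro i hi
    refine hMcomm _ fun k => ?_
    refine commute_dOp θ der _ _ (fun a => ?_) (fun a => ?_)
    · exact (commute_ddOp θb der i (θ k.succ.succ a)
        (fun b => (h_mixed_diff _ i (hss_ne k i hi).symm a b : Commute (θ _ a) (θb i b)))
        (fun b => ((h_der_θ _ b a : Commute (der b) (θ _ a)).symm))).symm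
    · exact (commute_ddOp θb der i (der a)
        (fun b => (h_der_θb i a b : Commute (der a) (θb i b)))
        (fun b => (h_der_comm a b : Commute (der a) (der b)))).symm
  -- the key commutator identity
  have hkey := key_comm ηup ηlow hη_symm hη_inv hη_inv' θ θb der h_mixed_same h_mixed_diff
    h_der_comm h_der_θ h_der_θb i0 i1 hne
  -- abbreviation
  set K : R := dOp θ der i0 * (dOp θ der i1 * trOp ηlow θb i0 i1) + boxOp ηup der
      - dOp θ der i0 * ddOp θb der i0 - dOp θ der i1 * ddOp θb der i1 with hK
  have cKM : Commute K M.prod := by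
    rw [hK]
    exact (((c_d0M.mul_left (c_d1M.mul_left c_TM)).add_left c_boxM).sub_left
      (c_d0M.mul_left (c_ddM i0 (by omega)))).sub_left
      (c_d1M.mul_left (c_ddM i1 (by omega)))
  -- rewrite the list
  rw [hL]
  simp only [List.drop_succ_cons, List.drop_zero, List.prod_cons]
  -- left-hand side
  have lhs_eq : trOp ηlow θb i0 i1 * (dOp θ der i0 * (dOp θ der i1 * M.prod) * φ)
      = (M.prod * K) * φ := by
    have h1 : trOp ηlow θb i0 i1 * (dOp θ der i0 * (dOp θ der i1 * M.prod) * φ)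
        = ((trOp ηlow θb i0 i1 * (dOp θ der i0 * dOp θ der i1)) * M.prod) * φ := by
      simp only [mul_assoc]
    rw [h1, hkey, cKM.eq]
  rw [lhs_eq]
  -- it remains to see M.prod * K = M.prod * labOp
  have hS1 : M.prod * (∑ i : Fin (n + 2), dOp θ der i * ddOp θb der i)
      = M.prod * (dOp θ der i0 * ddOp θb der i0)
        + M.prod * (dOp θ der i1 * ddOp θb der i1) := by
    rw [Finset.mul_sum]
    rw [← Finset.sum_subset (Finset.subset_univ ({i0, i1} : Finset (Fin (n + 2)))) ?_]
    · rw [Finset.sum_pair hne]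
    · intro i _ hi
      simp only [Finset.mem_insert, Finset.mem_singleton, not_or] at hi
      have hival : 2 ≤ i.val := by
        rcases hi with ⟨hi0', hi1'⟩
        have a0 : i.val ≠ 0 := fun h => hi0' (by rw [Fin.ext_iff, hv0, h])
        have a1 : i.val ≠ 1 := fun h => hi1' (by rw [Fin.ext_iff, hv1, h])
        omega
      rw [← mul_assoc, hMzero i hival, zero_mul]
  -- the double sum
  have hg_hi : ∀ i j : Fin (n + 2), 2 ≤ i.val →
      M.prod * (dOp θ der i * dOp θ der j * trOp' ηlow θb i j) = 0 := by
    intro i j hi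
    rw [show dOp θ der i * dOp θ der j * trOp' ηlow θb i j
        = dOp θ der i * (dOp θ der j * trOp' ηlow θb i j) by rw [mul_assoc]]
    rw [← mul_assoc, hMzero i hi, zero_mul]
  have hg_j2 : ∀ i j : Fin (n + 2), i ≠ j → 2 ≤ j.val →
      M.prod * (dOp θ der i * dOp θ der j * trOp' ηlow θb i j) = 0 := by
    intro i j hij hj
    rw [(cdd i j hij).eq]
    rw [show dOp θ der j * dOp θ der i * trOp' ηlow θb i j
        = dOp θ der j * (dOp θ der i * trOp' ηlow θb i j) by rw [mul_assoc]]
    rw [← mul_assoc, hMzero j hj, zero_mul]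
  have hg_diag : ∀ i : Fin (n + 2),
      M.prod * (dOp θ der i * dOp θ der i * trOp' ηlow θb i i) = 0 := by
    intro i
    simp [trOp']
  have hG0 : (∑ j : Fin (n + 2), M.prod * (dOp θ der i0 * dOp θ der j * trOp' ηlow θb i0 j))
      = M.prod * (dOp θ der i0 * dOp θ der i1 * trOp' ηlow θb i0 i1) := by
    rw [← Finset.sum_subset (Finset.subset_univ ({i1} : Finset (Fin (n + 2)))) ?_]
    · rw [Finset.sum_singleton]
    · intro j _ hj
      simp only [Finset.mem_singleton] at hj
      by_cases hj0 : j = i0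
      · subst hj0; exact hg_diag j
      · have hjval : 2 ≤ j.val := by
          have a0 : j.val ≠ 0 := fun h => hj0 (by rw [Fin.ext_iff, hv0, h])
          have a1 : j.val ≠ 1 := fun h => hj (by rw [Fin.ext_iff, hv1, h])
          omega
        exact hg_j2 i0 j (fun h => hj0 h.symm) hjval
  have hG1 : (∑ j : Fin (n + 2), M.prod * (dOp θ der i1 * dOp θ der j * trOp' ηlow θb i1 j))
      = M.prod * (dOp θ der i1 * dOp θ der i0 * trOp' ηlow θb i1 i0) := by
    rw [← Finset.sum_subset (Finset.subset_univ ({i0} : Finset (Fin (n + 2)))) ?_]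
    · rw [Finset.sum_singleton]
    · intro j _ hj
      simp only [Finset.mem_singleton] at hj
      by_cases hj1 : j = i1
      · subst hj1; exact hg_diag j
      · have hjval : 2 ≤ j.val := by
          have a0 : j.val ≠ 0 := fun h => hj (by rw [Fin.ext_iff, hv0, h])
          have a1 : j.val ≠ 1 := fun h => hj1 (by rw [Fin.ext_iff, hv1, h])
          omega
        exact hg_j2 i1 j (fun h => hj1 h.symm) hjval
  have hS2 : M.prod * (∑ i : Fin (n + 2), ∑ j : Fin (n + 2),
        dOp θ der i * dOp θ der j * trOp' ηlow θb i j)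
      = M.prod * (dOp θ der i0 * dOp θ der i1 * trOp' ηlow θb i0 i1)
        + M.prod * (dOp θ der i1 * dOp θ der i0 * trOp' ηlow θb i1 i0) := by
    simp only [Finset.mul_sum]
    rw [← Finset.sum_subset (Finset.subset_univ ({i0, i1} : Finset (Fin (n + 2)))) ?_]
    · rw [Finset.sum_pair hne, hG0, hG1]
    · intro i _ hi
      simp only [Finset.mem_insert, Finset.mem_singleton, not_or] at hi
      have hival : 2 ≤ i.val := by
        rcases hi with ⟨hi0', hi1'⟩
        have a0 : i.val ≠ 0 := fun h => hi0' (by rw [Fin.ext_iff, hv0, h])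
        have a1 : i.val ≠ 1 := fun h => hi1' (by rw [Fin.ext_iff, hv1, h])
        omega
      exact Finset.sum_eq_zero fun j _ => hg_hi i j hival
  have htr10 : trOp' ηlow θb i1 i0 = trOp ηlow θb i0 i1 := by
    rw [trOp', if_neg hne.symm]
    exact (tr_symm ηlow θb hlow_symm i0 i1 hne (h_θbθb_diff i0 i1 hne)).symm
  have htr01 : trOp' ηlow θb i0 i1 = trOp ηlow θb i0 i1 := by
    rw [trOp', if_neg hne]
  have hS2' : M.prod * (∑ i : Fin (n + 2), ∑ j : Fin (n + 2),
        dOp θ der i * dOp θ der j * trOp' ηlow θb i j)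
      = (2:ℝ) • (M.prod * (dOp θ der i0 * dOp θ der i1 * trOp ηlow θb i0 i1)) := by
    rw [hS2, htr01, htr10, (cdd i1 i0 hne.symm).eq, two_smul]
  have hMK : M.prod * labOp ηup ηlow θ θb der = M.prod * K := by
    rw [labOp, mul_add, mul_sub, mul_smul_comm, hS1, hS2', smul_smul]
    norm_num
    rw [hK]
    simp only [mul_add, mul_sub, mul_assoc]
    abel
  rw [← hMK, mul_assoc]

/-- generalized Damour–Deser identity
`Tr₁₂ (d₁ d₂ ⋯ d_s φ) = d₃ d₄ ⋯ d_s (𝖥 φ)` for any multiform `φ`. -/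
theorem damour_deser
    {R : Type*} [Ring R] [Algebra ℝ R] {D s : ℕ} (hs : 2 ≤ s)
    (ηup ηlow : Fin D → Fin D → ℝ)
    (hη_symm : ∀ μ ν, ηup μ ν = ηup ν μ)
    (hη_inv : ∀ μ ν, (∑ lam : Fin D, ηup μ lam * ηlow lam ν) = if μ = ν then 1 else 0)
    (θ θb : Fin s → Fin D → R) (der : Fin D → R)
    (h_mixed_same : ∀ (i : Fin s) (μ ν : Fin D),
      θ i μ * θb i ν + θb i ν * θ i μ = algebraMap ℝ R (ηup μ ν))
    (h_mixed_diff : ∀ (i j : Fin s), i ≠ j → ∀ (μ ν : Fin D),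
      θ i μ * θb j ν = θb j ν * θ i μ)
    (h_θθ_same : ∀ (i : Fin s) (μ ν : Fin D), θ i μ * θ i ν = -(θ i ν * θ i μ))
    (h_θθ_diff : ∀ (i j : Fin s), i ≠ j → ∀ (μ ν : Fin D), θ i μ * θ j ν = θ j ν * θ i μ)
    (h_θbθb_same : ∀ (i : Fin s) (μ ν : Fin D), θb i μ * θb i ν = -(θb i ν * θb i μ))
    (h_θbθb_diff : ∀ (i j : Fin s), i ≠ j → ∀ (μ ν : Fin D),
      θb i μ * θb j ν = θb j ν * θb i μ)
    (h_der_comm : ∀ μ ν, der μ * der ν = der ν * der μ)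
    (h_der_θ : ∀ (i : Fin s) (μ ν : Fin D), der μ * θ i ν = θ i ν * der μ)
    (h_der_θb : ∀ (i : Fin s) (μ ν : Fin D), der μ * θb i ν = θb i ν * der μ) :
    ∀ φ : R,
      trOp ηlow θb ⟨0, by omega⟩ ⟨1, by omega⟩ * ((List.ofFn (dOp θ der)).prod * φ)
        = ((List.ofFn (dOp θ der)).drop 2).prod * (labOp ηup ηlow θ θb der * φ) := by
  intro φ
  obtain ⟨n, rfl⟩ : ∃ n, s = n + 2 := ⟨s - 2, by omega⟩
  exact main_aux ηup ηlow hη_symm hη_inv θ θb der h_mixed_same h_mixed_diff h_θθ_same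
    h_θθ_diff h_θbθb_diff h_der_comm h_der_θ h_der_θb φ ⟨0, by omega⟩ ⟨1, by omega⟩ rfl rfl


end Stmt9
end

section
/- (Lemma 1 of the paper.) Let $\mathcal{P}$ be a differential hyperform of $\Omega_{(s)}(\mathbb{R}^D)$, i.e. a smooth tensor field with components irreducible under $GL(D,\mathbb{R})$ in the antisymmetric convention for a Young diagram with $s$ columns. If $d_s\mathcal{P}=0$, then $d_i\mathcal{P}=0$ for every $i\in\{1,\dots,s\}$, where $d_i$ is the exterior derivative acting on the $i$-th column of antisymmetric indices. -/
namespace Stmt12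

/-- partial derivative `∂_μ` -/
noncomputable def pd {D : ℕ} (μ : Fin D) (f : (Fin D → ℝ) → ℝ) : (Fin D → ℝ) → ℝ :=
  fun x => fderiv ℝ f x (Pi.single μ 1)

/-- components of a tensor field on `ℝ^D` whose `i`-th column carries `ℓ i`
antisymmetric indices (the antisymmetric convention for a Young diagram with `s`
columns of lengths `ℓ 0 ≥ ℓ 1 ≥ …`). -/
abbrev TF (D s : ℕ) (ℓ : Fin s → ℕ) :=
  ((i : Fin s) → Fin (ℓ i) → Fin D) → (Fin D → ℝ) → ℝ

/-- complete antisymmetry in the indices of each column -/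
def ColAntisym {D s : ℕ} (ℓ : Fin s → ℕ) (P : TF D s ℓ) : Prop :=
  ∀ (i : Fin s) (σ : Equiv.Perm (Fin (ℓ i))) (v : (j : Fin s) → Fin (ℓ j) → Fin D)
    (x : Fin D → ℝ),
    P (Function.update v i (fun a => v i (σ a))) x = ((Equiv.Perm.sign σ : ℤ) : ℝ) * P v x

/-- irreducibility (antisymmetric convention): complete antisymmetrization of all the
indices of column `i` together with one index of a column `j` to its right vanishes. -/
def SchurIrred {D s : ℕ} (ℓ : Fin s → ℕ) (P : TF D s ℓ) : Prop :=
  ∀ (i j : Fin s), i < j → ∀ (a : Fin (ℓ j)) (v : (j' : Fin s) → Fin (ℓ j') → Fin D)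
    (x : Fin D → ℝ),
    (∑ σ : Equiv.Perm (Fin (ℓ i + 1)),
      ((Equiv.Perm.sign σ : ℤ) : ℝ) *
        P (Function.update
            (Function.update v i (fun b => (Fin.snoc (v i) (v j a) : Fin (ℓ i + 1) → Fin D) (σ b.castSucc)))
            j (Function.update (v j) a ((Fin.snoc (v i) (v j a) : Fin (ℓ i + 1) → Fin D) (σ (Fin.last (ℓ i)))))) x)
      = 0

/-- `dᵢ P = 0`: the exterior derivative on the `i`-th column vanishes, i.e. the
strength-one antisymmetrization of `∂_ρ P` over `ρ` together with column `i` is zero. -/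
def CurlZero {D s : ℕ} (ℓ : Fin s → ℕ) (P : TF D s ℓ) (i : Fin s) : Prop :=
  ∀ (v : (j : Fin s) → Fin (ℓ j) → Fin D) (ρ : Fin D) (x : Fin D → ℝ),
    (∑ σ : Equiv.Perm (Fin (ℓ i + 1)),
      ((Equiv.Perm.sign σ : ℤ) : ℝ) *
        pd ((Fin.cons ρ (v i) : Fin (ℓ i + 1) → Fin D) (σ 0))
          (P (Function.update v i (fun b => (Fin.cons ρ (v i) : Fin (ℓ i + 1) → Fin D) (σ b.succ)))) x) = 0

/-! ### Auxiliary machinery -/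

open Equiv Function

noncomputable def Sg {n : ℕ} (σ : Equiv.Perm (Fin n)) : ℝ := ((Equiv.Perm.sign σ : ℤ) : ℝ)
lemma Sg_mul {n : ℕ} (σ τ : Equiv.Perm (Fin n)) : Sg (σ * τ) = Sg σ * Sg τ := by simp [Sg]
lemma Sg_mul_self {n : ℕ} (σ : Equiv.Perm (Fin n)) : Sg σ * Sg σ = 1 := by
  simp [Sg, ← Int.cast_mul, ← Units.val_mul]
lemma Sg_inv {n : ℕ} (σ : Equiv.Perm (Fin n)) : Sg σ⁻¹ = Sg σ := by simp [Sg]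

variable {ι : Type*} {r q : ℕ}

lemma last_not_range : (Fin.last r) ∉ Set.range (Fin.castSuccEmb : Fin r ↪ Fin (r+1)) := by
  rintro ⟨b, hb⟩
  exact absurd hb (Fin.castSucc_lt_last b).ne

theorem unpack (Ψ : (Fin r → ι) → (Fin q → ι) → ℝ)
    (h1 : ∀ (σ : Perm (Fin r)) (μ : Fin r → ι) (ν : Fin q → ι),
       Ψ (fun b => μ (σ b)) ν = Sg σ * Ψ μ ν)
    (hS : ∀ (a : Fin q) (μ : Fin r → ι) (ν : Fin q → ι),
      ∑ σ : Perm (Fin (r+1)), Sg σ *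
        Ψ (fun b => (Fin.snoc μ (ν a) : Fin (r+1) → ι) (σ b.castSucc))
          (Function.update ν a ((Fin.snoc μ (ν a) : Fin (r+1) → ι) (σ (Fin.last r)))) = 0)
    (a : Fin q) (μ : Fin r → ι) (ν : Fin q → ι) :
    Ψ μ ν = ∑ u : Fin r, Ψ (Function.update μ u (ν a)) (Function.update ν a (μ u)) := by
  classical
  set w : Fin (r+1) → ι := Fin.snoc μ (ν a) with hw
  set emb : Fin r ↪ Fin (r+1) := Fin.castSuccEmb with hemb
  have hembapp : ∀ b : Fin r, emb b = b.castSucc := fun b => rfl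
  set E : Fin (r+1) × Perm (Fin r) → Perm (Fin (r+1)) :=
    fun p => Equiv.swap p.1 (Fin.last r) * (p.2.viaFintypeEmbedding emb) with hE
  have hlastfix : ∀ π : Perm (Fin r), (π.viaFintypeEmbedding emb) (Fin.last r) = Fin.last r :=
    fun π => Equiv.Perm.viaFintypeEmbedding_apply_notMem_range π emb last_not_range
  have hEinj : Function.Injective E := by
    rintro ⟨t, π⟩ ⟨t', π'⟩ h
    have h1' : t = t' := by
      have := congrArg (fun σ : Perm (Fin (r+1)) => σ (Fin.last r)) h
      simpa [hE, Equiv.Perm.mul_apply, hlastfix] using this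
    subst h1'
    have h2' : (π.viaFintypeEmbedding emb) = (π'.viaFintypeEmbedding emb) := by
      have := mul_left_cancel h
      exact this
    have : π = π' := Equiv.ext fun b => emb.injective (by
      have := congrArg (fun σ : Perm (Fin (r+1)) => σ (emb b)) h2'
      simpa only [Equiv.Perm.viaFintypeEmbedding_apply_image] using this)
    simp [this]
  have hEbij : Function.Bijective E := by
    rw [Fintype.bijective_iff_injective_and_card]
    refine ⟨hEinj, ?_⟩
    simp [Fintype.card_perm, Fintype.card_prod, Nat.factorial_succ]
  have key := hS a μ ν
  rw [← Function.Bijective.sum_comp hEbij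
      (fun σ => Sg σ * Ψ (fun b => w (σ b.castSucc)) (Function.update ν a (w (σ (Fin.last r)))))] at key
  rw [Fintype.sum_prod_type] at key
  have hterm : ∀ (t : Fin (r+1)) (π : Perm (Fin r)),
      Sg (E (t, π)) * Ψ (fun b => w ((E (t, π)) b.castSucc))
        (Function.update ν a (w ((E (t, π)) (Fin.last r))))
      = Sg (Equiv.swap t (Fin.last r)) *
          Ψ (fun b => w (Equiv.swap t (Fin.last r) b.castSucc)) (Function.update ν a (w t)) := by
    intro t π
    have hatlast : (E (t, π)) (Fin.last r) = t := by
      simp [hE, Equiv.Perm.mul_apply, hlastfix]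
    have hatcs : ∀ b : Fin r, (E (t, π)) b.castSucc =
        Equiv.swap t (Fin.last r) ((π b).castSucc) := by
      intro b
      have : (π.viaFintypeEmbedding emb) b.castSucc = (π b).castSucc := by
        have := Equiv.Perm.viaFintypeEmbedding_apply_image π emb b
        simpa [hembapp] using this
      simp [hE, Equiv.Perm.mul_apply, this]
    rw [hatlast]
    have hΨ : Ψ (fun b => w ((E (t, π)) b.castSucc)) (Function.update ν a (w t))
        = Sg π * Ψ (fun b => w (Equiv.swap t (Fin.last r) b.castSucc)) (Function.update ν a (w t)) := by
      have := h1 π (fun b => w (Equiv.swap t (Fin.last r) b.castSucc)) (Function.update ν a (w t))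
      simp only [hatcs]
      exact this
    have hsgE : Sg (E (t, π)) = Sg (Equiv.swap t (Fin.last r)) * Sg π := by
      rw [hE]
      simp only []
      rw [Sg_mul]
      congr 1
      simp [Sg, Equiv.Perm.viaFintypeEmbedding_sign]
    rw [hΨ, hsgE, mul_assoc, ← mul_assoc (Sg π), Sg_mul_self, one_mul]
  have key2 : ∑ t : Fin (r+1), (r.factorial : ℝ) *
      (Sg (Equiv.swap t (Fin.last r)) *
        Ψ (fun b => w (Equiv.swap t (Fin.last r) b.castSucc)) (Function.update ν a (w t))) = 0 := by
    rw [← key]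
    refine Finset.sum_congr rfl fun t _ => ?_
    rw [Finset.sum_congr rfl (fun π _ => hterm t π), Finset.sum_const]
    simp [Fintype.card_perm, mul_comm]
  have hlastterm :
      (r.factorial : ℝ) * (Sg (Equiv.swap (Fin.last r) (Fin.last r)) *
        Ψ (fun b => w (Equiv.swap (Fin.last r) (Fin.last r) b.castSucc))
          (Function.update ν a (w (Fin.last r))))
      = (r.factorial : ℝ) * Ψ μ ν := by
    have e1 : (fun b : Fin r => w (Equiv.swap (Fin.last r) (Fin.last r) b.castSucc)) = μ := by
      funext b
      simp [Equiv.swap_self, hw, Fin.snoc_castSucc]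
    have e2 : Function.update ν a (w (Fin.last r)) = ν := by
      rw [hw]
      simp [Fin.snoc_last, Function.update_eq_self]
    rw [e1, e2]
    simp [Equiv.swap_self, Sg]
  have hcastterm : ∀ u : Fin r,
      (r.factorial : ℝ) * (Sg (Equiv.swap u.castSucc (Fin.last r)) *
        Ψ (fun b => w (Equiv.swap u.castSucc (Fin.last r) b.castSucc))
          (Function.update ν a (w u.castSucc)))
      = -((r.factorial : ℝ) * Ψ (Function.update μ u (ν a)) (Function.update ν a (μ u))) := by
    intro u
    have e1 : (fun b : Fin r => w (Equiv.swap u.castSucc (Fin.last r) b.castSucc))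
        = Function.update μ u (ν a) := by
      funext b
      by_cases hbu : b = u
      · subst hbu
        simp [Equiv.swap_apply_left, hw, Fin.snoc_last]
      · rw [Equiv.swap_apply_of_ne_of_ne (by simpa using hbu) (Fin.castSucc_lt_last b).ne]
        simp [hw, Fin.snoc_castSucc, Function.update_of_ne hbu]
    have e2 : Function.update ν a (w u.castSucc) = Function.update ν a (μ u) := by
      rw [hw]; simp [Fin.snoc_castSucc]
    have e3 : Sg (Equiv.swap u.castSucc (Fin.last r)) = -1 := by
      simp [Sg, Equiv.Perm.sign_swap (Fin.castSucc_lt_last u).ne]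
    rw [e1, e2, e3]
    ring
  rw [Fin.sum_univ_castSucc] at key2
  rw [Finset.sum_congr rfl (fun u _ => hcastterm u), hlastterm, Finset.sum_neg_distrib,
    ← Finset.mul_sum] at key2
  have hfac : (r.factorial : ℝ) ≠ 0 := Nat.cast_ne_zero.mpr r.factorial_ne_zero
  exact mul_left_cancel₀ hfac (by linarith [key2])

def colA (k : ℕ) (hk : k ≤ q) (α : Perm (Fin r)) (β : Perm (Fin q))
    (μ : Fin r → ι) (ν : Fin q → ι) : Fin r → ι :=
  fun b => if h : (b : ℕ) < k then ν (β ⟨b, h.trans_le hk⟩) else μ (α b)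

def colB (hqr : q ≤ r) (k : ℕ) (α : Perm (Fin r)) (β : Perm (Fin q))
    (μ : Fin r → ι) (ν : Fin q → ι) : Fin q → ι :=
  fun b => if (b : ℕ) < k then μ (α (Fin.castLE hqr b)) else ν (β b)

noncomputable def AA (Ψ : ι → (Fin r → ι) → (Fin q → ι) → ℝ) (hqr : q ≤ r) (k : ℕ) (hk : k ≤ q)
    (ρ : ι) (μ : Fin r → ι) (ν : Fin q → ι) : ℝ :=
  ∑ α : Perm (Fin r), ∑ β : Perm (Fin q),
    Sg α * Sg β * Ψ ρ (colA k hk α β μ ν) (colB hqr k α β μ ν)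

theorem AA_zero (Ψ : ι → (Fin r → ι) → (Fin q → ι) → ℝ) (hqr : q ≤ r)
    (h1 : ∀ ρ (σ : Perm (Fin r)) μ ν, Ψ ρ (fun b => μ (σ b)) ν = Sg σ * Ψ ρ μ ν)
    (h2 : ∀ ρ μ (σ : Perm (Fin q)) ν, Ψ ρ μ (fun b => ν (σ b)) = Sg σ * Ψ ρ μ ν)
    (ρ : ι) (μ : Fin r → ι) (ν : Fin q → ι) :
    AA Ψ hqr 0 (Nat.zero_le q) ρ μ ν = ((r.factorial * q.factorial : ℕ) : ℝ) * Ψ ρ μ ν := by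
  unfold AA
  have e : ∀ (α : Perm (Fin r)) (β : Perm (Fin q)),
      Sg α * Sg β * Ψ ρ (colA 0 (Nat.zero_le q) α β μ ν) (colB hqr 0 α β μ ν) = Ψ ρ μ ν := by
    intro α β
    have eA : colA 0 (Nat.zero_le q) α β μ ν = fun b => μ (α b) := by
      funext b; simp [colA]
    have eB : colB hqr 0 α β μ ν = fun b => ν (β b) := by
      funext b; simp [colB]
    rw [eA, eB, h1, h2]
    calc Sg α * Sg β * (Sg α * (Sg β * Ψ ρ μ ν))
        = (Sg α * Sg α) * ((Sg β * Sg β) * Ψ ρ μ ν) := by ring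
      _ = Ψ ρ μ ν := by rw [Sg_mul_self, Sg_mul_self]; ring
  rw [Finset.sum_congr rfl fun α _ => Finset.sum_congr rfl fun β _ => e α β]
  simp [Fintype.card_perm]
  ring


lemma card_filter_lt {k : ℕ} (hkr : k ≤ r) :
    (Finset.univ.filter (fun u : Fin r => (u : ℕ) < k)).card = k := by
  have : (Finset.univ.filter (fun u : Fin r => (u : ℕ) < k))
      = (Finset.univ : Finset (Fin k)).map (Fin.castLEEmb hkr) := by
    ext u
    simp only [Finset.mem_filter, Finset.mem_univ, true_and, Finset.mem_map]
    constructor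
    · intro h; exact ⟨⟨u, h⟩, rfl⟩
    · rintro ⟨v, rfl⟩; simpa using v.2
  rw [this, Finset.card_map]; simp

theorem AA_rec (Ψ : ι → (Fin r → ι) → (Fin q → ι) → ℝ) (hqr : q ≤ r)
    (h1 : ∀ ρ (σ : Perm (Fin r)) μ ν, Ψ ρ (fun b => μ (σ b)) ν = Sg σ * Ψ ρ μ ν)
    (hschur : ∀ ρ (a : Fin q) (μ : Fin r → ι) (ν : Fin q → ι),
       Ψ ρ μ ν = ∑ u : Fin r, Ψ ρ (Function.update μ u (ν a)) (Function.update ν a (μ u)))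
    {k : ℕ} (hk : k < q) (ρ : ι) (μ : Fin r → ι) (ν : Fin q → ι) :
    ((k : ℝ) + 1) * AA Ψ hqr k hk.le ρ μ ν
      = (((r - k : ℕ)) : ℝ) * AA Ψ hqr (k+1) hk ρ μ ν := by
  classical
  set a : Fin q := ⟨k, hk⟩ with ha
  set khat : Fin r := ⟨k, hk.trans_le hqr⟩ with hkhat
  -- G u : the u-th term after applying the Schur identity
  set G : Fin r → ℝ := fun u => ∑ α : Perm (Fin r), ∑ β : Perm (Fin q),
    Sg α * Sg β * Ψ ρ (Function.update (colA k hk.le α β μ ν) u (colB hqr k α β μ ν a))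
      (Function.update (colB hqr k α β μ ν) a (colA k hk.le α β μ ν u)) with hG
  have step1 : AA Ψ hqr k hk.le ρ μ ν = ∑ u : Fin r, G u := by
    unfold AA
    have e : ∀ (α : Perm (Fin r)) (β : Perm (Fin q)),
        Sg α * Sg β * Ψ ρ (colA k hk.le α β μ ν) (colB hqr k α β μ ν)
        = ∑ u : Fin r, Sg α * Sg β *
            Ψ ρ (Function.update (colA k hk.le α β μ ν) u (colB hqr k α β μ ν a))
              (Function.update (colB hqr k α β μ ν) a (colA k hk.le α β μ ν u)) := by
      intro α β
      rw [hschur ρ a (colA k hk.le α β μ ν) (colB hqr k α β μ ν), Finset.mul_sum]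
    rw [Finset.sum_congr rfl fun α _ => Finset.sum_congr rfl fun β _ => e α β]
    rw [hG]
    rw [Finset.sum_congr rfl fun α (_ : α ∈ Finset.univ) => Finset.sum_comm]
    exact Finset.sum_comm
  have steplt : ∀ u : Fin r, (u : ℕ) < k → G u = - AA Ψ hqr k hk.le ρ μ ν := by
    intro u hu
    have huq : (u : ℕ) < q := hu.trans hk
    set u' : Fin q := ⟨u, huq⟩ with hu'
    have hu'a : u' ≠ a := Fin.ne_of_val_ne (by simp [hu', ha]; omega)
    have conf1 : ∀ (α : Perm (Fin r)) (β : Perm (Fin q)),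
        Function.update (colA k hk.le α β μ ν) u (colB hqr k α β μ ν a)
          = colA k hk.le α (β * Equiv.swap u' a) μ ν := by
      intro α β
      funext b
      rcases eq_or_ne b u with rfl | hbu
      · rw [Function.update_self]
        have ha' : ¬ ((a : ℕ) < k) := by simp [ha]
        simp only [colA, colB, if_neg ha', dif_pos hu, Equiv.Perm.mul_apply]
        congr 1
        rw [show (⟨(b:ℕ), hu.trans_le hk.le⟩ : Fin q) = u' from rfl, Equiv.swap_apply_left]
      · rw [Function.update_of_ne hbu]
        simp only [colA, Equiv.Perm.mul_apply]
        by_cases hbk : (b : ℕ) < k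
        · rw [dif_pos hbk, dif_pos hbk]
          congr 2
          rw [Equiv.swap_apply_of_ne_of_ne]
          · exact Fin.ne_of_val_ne (by simp [hu']; exact fun hh => hbu (Fin.ext hh))
          · exact Fin.ne_of_val_ne (by simp [ha]; omega)
        · rw [dif_neg hbk, dif_neg hbk]
    have conf2 : ∀ (α : Perm (Fin r)) (β : Perm (Fin q)),
        Function.update (colB hqr k α β μ ν) a (colA k hk.le α β μ ν u)
          = colB hqr k α (β * Equiv.swap u' a) μ ν := by
      intro α β
      funext b
      rcases eq_or_ne b a with rfl | hba
      · rw [Function.update_self]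
        have hb' : ¬ ((a : ℕ) < k) := by simp [ha]
        simp only [colA, colB, if_neg hb', dif_pos hu, Equiv.Perm.mul_apply]
        congr 1
        rw [Equiv.swap_apply_right]
      · rw [Function.update_of_ne hba]
        simp only [colB, Equiv.Perm.mul_apply]
        by_cases hbk : (b : ℕ) < k
        · rw [if_pos hbk, if_pos hbk]
        · rw [if_neg hbk, if_neg hbk]
          congr 2
          rw [Equiv.swap_apply_of_ne_of_ne]
          · exact Fin.ne_of_val_ne (by simp [hu']; omega)
          · exact hba
    have hsw : Sg (Equiv.swap u' a) = -1 := by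
      simp [Sg, Equiv.Perm.sign_swap hu'a]
    have e : ∀ (α : Perm (Fin r)) (β : Perm (Fin q)),
        Sg α * Sg β * Ψ ρ (Function.update (colA k hk.le α β μ ν) u (colB hqr k α β μ ν a))
          (Function.update (colB hqr k α β μ ν) a (colA k hk.le α β μ ν u))
        = - (Sg α * Sg (β * Equiv.swap u' a) *
            Ψ ρ (colA k hk.le α (β * Equiv.swap u' a) μ ν)
              (colB hqr k α (β * Equiv.swap u' a) μ ν)) := by
      intro α β
      rw [conf1 α β, conf2 α β, Sg_mul, hsw]
      ring
    rw [hG]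
    simp only []
    rw [Finset.sum_congr rfl fun α _ => Finset.sum_congr rfl fun β _ => e α β]
    unfold AA
    rw [← Finset.sum_neg_distrib]
    refine Finset.sum_congr rfl fun α _ => ?_
    rw [← Finset.sum_neg_distrib]
    exact Equiv.sum_comp (Equiv.mulRight (Equiv.swap u' a))
      (fun β => - (Sg α * Sg β * Ψ ρ (colA k hk.le α β μ ν) (colB hqr k α β μ ν)))
  have stepge : ∀ u : Fin r, ¬ ((u : ℕ) < k) → G u = AA Ψ hqr (k+1) hk ρ μ ν := by
    intro u hu
    have conf1 : ∀ (α : Perm (Fin r)) (β : Perm (Fin q)) (b : Fin r),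
        Function.update (colA k hk.le α β μ ν) u (colB hqr k α β μ ν a) b
          = colA (k+1) hk (α * Equiv.swap khat u) β μ ν (Equiv.swap khat u b) := by
      intro α β b
      rcases eq_or_ne b u with rfl | hbu
      · rw [Function.update_self, Equiv.swap_apply_right]
        have ha' : ¬ ((a : ℕ) < k) := by simp [ha]
        simp only [colA, colB, if_neg ha', Equiv.Perm.mul_apply]
        rw [dif_pos (show ((khat : Fin r) : ℕ) < k+1 by simp [hkhat])]
      · rw [Function.update_of_ne hbu]
        rcases eq_or_ne b khat with rfl | hbk
        · rw [Equiv.swap_apply_left]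
          have hneq : ¬ ((khat : Fin r) : ℕ) < k := by simp [hkhat]
          have hukval : (u : ℕ) ≠ k := fun h => hbu (Fin.ext (by simp [hkhat, h]))
          have huk1 : ¬ ((u : ℕ) < k + 1) := by omega
          simp only [colA, Equiv.Perm.mul_apply, dif_neg hneq, dif_neg huk1]
          congr 1
          rw [Equiv.swap_apply_right]
        · rw [Equiv.swap_apply_of_ne_of_ne hbk hbu]
          simp only [colA, Equiv.Perm.mul_apply]
          by_cases hblt : (b : ℕ) < k
          · rw [dif_pos hblt, dif_pos (by omega : (b : ℕ) < k + 1)]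
          · have hbkval : (b : ℕ) ≠ k := fun h => hbk (Fin.ext (by simp [hkhat, h]))
            rw [dif_neg hblt, dif_neg (by omega : ¬ ((b : ℕ) < k + 1))]
            congr 1
            rw [Equiv.swap_apply_of_ne_of_ne hbk hbu]
    have conf2 : ∀ (α : Perm (Fin r)) (β : Perm (Fin q)),
        Function.update (colB hqr k α β μ ν) a (colA k hk.le α β μ ν u)
          = colB hqr (k+1) (α * Equiv.swap khat u) β μ ν := by
      intro α β
      funext b
      rcases eq_or_ne b a with rfl | hba
      · rw [Function.update_self]
        simp only [colA, colB, dif_neg hu, Equiv.Perm.mul_apply,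
          if_pos (show ((a : Fin q) : ℕ) < k+1 by simp [ha])]
        congr 1
        rw [show Fin.castLE hqr a = khat from rfl, Equiv.swap_apply_left]
      · rw [Function.update_of_ne hba]
        simp only [colB, Equiv.Perm.mul_apply]
        by_cases hblt : (b : ℕ) < k
        · rw [if_pos hblt, if_pos (by omega : (b : ℕ) < k + 1)]
          congr 2
          rw [Equiv.swap_apply_of_ne_of_ne]
          · exact Fin.ne_of_val_ne (by simp [hkhat]; omega)
          · exact Fin.ne_of_val_ne (by simp; omega)
        · have hbkval : (b : ℕ) ≠ k := fun h => hba (Fin.ext (by simp [ha, h]))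
          rw [if_neg hblt, if_neg (by omega : ¬ ((b : ℕ) < k + 1))]
    have e : ∀ (α : Perm (Fin r)) (β : Perm (Fin q)),
        Sg α * Sg β * Ψ ρ (Function.update (colA k hk.le α β μ ν) u (colB hqr k α β μ ν a))
          (Function.update (colB hqr k α β μ ν) a (colA k hk.le α β μ ν u))
        = Sg (α * Equiv.swap khat u) * Sg β *
            Ψ ρ (colA (k+1) hk (α * Equiv.swap khat u) β μ ν)
              (colB hqr (k+1) (α * Equiv.swap khat u) β μ ν) := by
      intro α β
      have ec : Function.update (colA k hk.le α β μ ν) u (colB hqr k α β μ ν a)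
          = fun b => colA (k+1) hk (α * Equiv.swap khat u) β μ ν (Equiv.swap khat u b) :=
        funext (conf1 α β)
      rw [ec, conf2 α β,
        h1 ρ (Equiv.swap khat u) (colA (k+1) hk (α * Equiv.swap khat u) β μ ν) _, Sg_mul]
      ring
    rw [hG]
    simp only []
    rw [Finset.sum_congr rfl fun α _ => Finset.sum_congr rfl fun β _ => e α β]
    unfold AA
    exact Equiv.sum_comp (Equiv.mulRight (Equiv.swap khat u))
      (fun α => ∑ β : Perm (Fin q), Sg α * Sg β *
        Ψ ρ (colA (k+1) hk α β μ ν) (colB hqr (k+1) α β μ ν))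
  have step2 : ∑ u : Fin r, G u
      = (k : ℝ) * (- AA Ψ hqr k hk.le ρ μ ν) + ((r - k : ℕ) : ℝ) * AA Ψ hqr (k+1) hk ρ μ ν := by
    rw [← Finset.sum_filter_add_sum_filter_not Finset.univ (fun u : Fin r => (u : ℕ) < k)]
    rw [Finset.sum_congr rfl (fun u hu => steplt u (Finset.mem_filter.mp hu).2),
        Finset.sum_congr rfl (fun u hu => stepge u (Finset.mem_filter.mp hu).2)]
    rw [Finset.sum_const, Finset.sum_const, card_filter_lt (hk.le.trans hqr)]
    have : (Finset.univ.filter (fun u : Fin r => ¬ ((u : ℕ) < k))).card = r - k := by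
      have h := Finset.card_filter_add_card_filter_not
        (s := (Finset.univ : Finset (Fin r))) (p := fun u : Fin r => (u : ℕ) < k)
      rw [card_filter_lt (hk.le.trans hqr)] at h
      simp only [Finset.card_univ, Fintype.card_fin] at h
      omega
    rw [this]
    simp [nsmul_eq_mul]
  linear_combination step1.trans step2


theorem AA_const (Ψ : ι → (Fin r → ι) → (Fin q → ι) → ℝ) (hqr : q ≤ r)
    (h1 : ∀ ρ (σ : Perm (Fin r)) μ ν, Ψ ρ (fun b => μ (σ b)) ν = Sg σ * Ψ ρ μ ν)
    (h2 : ∀ ρ μ (σ : Perm (Fin q)) ν, Ψ ρ μ (fun b => ν (σ b)) = Sg σ * Ψ ρ μ ν)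
    (hschur : ∀ ρ (a : Fin q) (μ : Fin r → ι) (ν : Fin q → ι),
       Ψ ρ μ ν = ∑ u : Fin r, Ψ ρ (Function.update μ u (ν a)) (Function.update ν a (μ u))) :
    ∀ (k : ℕ) (hk : k ≤ q), ∃ C : ℝ, 0 < C ∧
      ∀ ρ μ ν, AA Ψ hqr k hk ρ μ ν = C * Ψ ρ μ ν := by
  intro k
  induction k with
  | zero =>
    intro hk
    refine ⟨((r.factorial * q.factorial : ℕ) : ℝ), by positivity, ?_⟩
    intro ρ μ ν
    exact AA_zero Ψ hqr h1 h2 ρ μ ν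
  | succ k ih =>
    intro hk1
    have hkq : k < q := hk1
    obtain ⟨C, hC, hCeq⟩ := ih hkq.le
    have hrk : 0 < ((r - k : ℕ) : ℝ) := by
      have : k < r := lt_of_lt_of_le hkq hqr
      have : 0 < r - k := by omega
      exact_mod_cast this
    refine ⟨((k : ℝ) + 1) * C / ((r - k : ℕ) : ℝ), by positivity, ?_⟩
    intro ρ μ ν
    have hrec := AA_rec Ψ hqr h1 hschur hkq ρ μ ν
    rw [hCeq ρ μ ν] at hrec
    have h' : AA Ψ hqr (k+1) hk1 ρ μ ν = AA Ψ hqr (k+1) hkq ρ μ ν := rfl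
    rw [h']
    field_simp
    linarith [hrec]

theorem abstract_curl (hqr : q ≤ r) (Ψ : ι → (Fin r → ι) → (Fin q → ι) → ℝ)
    (h1 : ∀ ρ (σ : Perm (Fin r)) μ ν, Ψ ρ (fun b => μ (σ b)) ν = Sg σ * Ψ ρ μ ν)
    (h2 : ∀ ρ μ (σ : Perm (Fin q)) ν, Ψ ρ μ (fun b => ν (σ b)) = Sg σ * Ψ ρ μ ν)
    (hschur : ∀ ρ (a : Fin q) (μ : Fin r → ι) (ν : Fin q → ι),
       Ψ ρ μ ν = ∑ u : Fin r, Ψ ρ (Function.update μ u (ν a)) (Function.update ν a (μ u)))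
    (hd2 : ∀ (c : Fin (q+1) → ι) (μ : Fin r → ι),
      ∑ π : Perm (Fin (q+1)), Sg π * Ψ (c (π 0)) μ (fun b => c (π b.succ)) = 0)
    (c : Fin (r+1) → ι) (ν : Fin q → ι) :
    ∑ σ : Perm (Fin (r+1)), Sg σ * Ψ (c (σ 0)) (fun b => c (σ b.succ)) ν = 0 := by
  classical
  obtain ⟨C, hC, hCeq⟩ := AA_const Ψ hqr h1 h2 hschur q le_rfl
  set T := ∑ σ : Perm (Fin (r+1)), Sg σ * Ψ (c (σ 0)) (fun b => c (σ b.succ)) ν with hT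
  have hinner : ∀ (α : Perm (Fin r)) (β : Perm (Fin q)),
      ∑ σ : Perm (Fin (r+1)), Sg σ *
        Ψ (c (σ 0)) (colA q le_rfl α β (fun b => c (σ b.succ)) ν)
          (colB hqr q α β (fun b => c (σ b.succ)) ν) = 0 := by
    intro α β
    -- the embedding of the q+1 "derivative ∪ second-column" positions
    have ginj : Function.Injective
        (fun t : Fin (q+1) => (Fin.cases 0 (fun b => (α (Fin.castLE hqr b)).succ) t : Fin (r+1))) := by
      intro t t' h
      induction t using Fin.cases with
      | zero =>
        induction t' using Fin.cases with
        | zero => rfl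
        | succ b' => simp at h; exact absurd h.symm (Fin.succ_ne_zero _)
      | succ b =>
        induction t' using Fin.cases with
        | zero => simp at h
        | succ b' =>
          simp only [Fin.cases_succ] at h
          have := Fin.succ_injective _ h
          have := α.injective this
          have := Fin.castLE_injective hqr this
          rw [this]
    set g : Fin (q+1) ↪ Fin (r+1) :=
      ⟨fun t => Fin.cases 0 (fun b => (α (Fin.castLE hqr b)).succ) t, ginj⟩ with hg
    set J : Perm (Fin (q+1)) → Perm (Fin (r+1)) :=
      fun π => π.viaFintypeEmbedding g with hJ
    have hJg : ∀ (π : Perm (Fin (q+1))) (t : Fin (q+1)), (J π) (g t) = g (π t) :=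
      fun π t => Equiv.Perm.viaFintypeEmbedding_apply_image π g t
    have hJfix : ∀ (π : Perm (Fin (q+1))) (b : Fin r), ¬ ((b : ℕ) < q) →
        (J π) ((α b).succ) = (α b).succ := by
      intro π b hb
      refine Equiv.Perm.viaFintypeEmbedding_apply_notMem_range π g ?_
      rintro ⟨t, ht⟩
      induction t using Fin.cases with
      | zero => exact absurd ht.symm (Fin.succ_ne_zero _)
      | succ b' =>
        simp only [hg, Function.Embedding.coeFn_mk, Fin.cases_succ] at ht
        have := α.injective (Fin.succ_injective _ ht)
        rw [← this] at hb
        exact hb (by simpa using (Fin.castLE hqr b').2)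
    have hSgJ : ∀ π : Perm (Fin (q+1)), Sg (J π) = Sg π := by
      intro π
      simp [hJ, Sg, Equiv.Perm.viaFintypeEmbedding_sign]
    set F : Perm (Fin (r+1)) → ℝ := fun σ =>
      Ψ (c (σ 0)) (colA q le_rfl α β (fun b => c (σ b.succ)) ν)
        (colB hqr q α β (fun b => c (σ b.succ)) ν) with hF
    have hdinner : ∀ σ : Perm (Fin (r+1)),
        ∑ π : Perm (Fin (q+1)), Sg π * F (σ * J π) = 0 := by
      intro σ
      have e : ∀ π : Perm (Fin (q+1)), F (σ * J π)
          = Ψ ((fun t => c (σ (g t))) (π 0))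
              (colA q le_rfl α β (fun b => c (σ b.succ)) ν)
              (fun b => (fun t => c (σ (g t))) (π b.succ)) := by
        intro π
        have e0 : c ((σ * J π) 0) = c (σ (g (π 0))) := by
          rw [Equiv.Perm.mul_apply, show (0 : Fin (r+1)) = g 0 from rfl, hJg]
        have eA : colA q le_rfl α β (fun b => c ((σ * J π) b.succ)) ν
            = colA q le_rfl α β (fun b => c (σ b.succ)) ν := by
          funext b
          simp only [colA]
          split_ifs with hb
          · rfl
          · rw [Equiv.Perm.mul_apply, hJfix π b hb]
        have eB : colB hqr q α β (fun b => c ((σ * J π) b.succ)) ν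
            = fun b => c (σ (g (π b.succ))) := by
          funext b
          simp only [colB, if_pos b.2]
          rw [Equiv.Perm.mul_apply, show (α (Fin.castLE hqr b)).succ = g b.succ from rfl, hJg]
        rw [hF]
        simp only []
        rw [e0, eA, eB]
      rw [Finset.sum_congr rfl fun π _ => by rw [e π]]
      exact hd2 (fun t => c (σ (g t))) (colA q le_rfl α β (fun b => c (σ b.succ)) ν)
    have havg : ∀ π : Perm (Fin (q+1)),
        ∑ σ : Perm (Fin (r+1)), (Sg σ * Sg π) * F (σ * J π)
          = ∑ σ : Perm (Fin (r+1)), Sg σ * F σ := by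
      intro π
      have hcomp := Equiv.sum_comp (Equiv.mulRight (J π))
        (fun τ => (Sg (τ * (J π)⁻¹) * Sg π) * F τ)
      simp only [Equiv.coe_mulRight] at hcomp
      calc ∑ σ : Perm (Fin (r+1)), (Sg σ * Sg π) * F (σ * J π)
          = ∑ σ : Perm (Fin (r+1)), (Sg (σ * J π * (J π)⁻¹) * Sg π) * F (σ * J π) := by
            refine Finset.sum_congr rfl fun σ _ => by rw [mul_inv_cancel_right]
        _ = ∑ τ : Perm (Fin (r+1)), (Sg (τ * (J π)⁻¹) * Sg π) * F τ := hcomp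
        _ = ∑ τ : Perm (Fin (r+1)), Sg τ * F τ := by
            refine Finset.sum_congr rfl fun τ _ => ?_
            rw [Sg_mul, Sg_inv, hSgJ, mul_assoc (Sg τ), Sg_mul_self, mul_one]
    have hzero : (((q+1).factorial : ℕ) : ℝ) * (∑ σ : Perm (Fin (r+1)), Sg σ * F σ) = 0 := by
      calc (((q+1).factorial : ℕ) : ℝ) * (∑ σ : Perm (Fin (r+1)), Sg σ * F σ)
          = ∑ π : Perm (Fin (q+1)), ∑ σ : Perm (Fin (r+1)), (Sg σ * Sg π) * F (σ * J π) := by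
            rw [Finset.sum_congr rfl fun π (_ : π ∈ Finset.univ) => havg π, Finset.sum_const]
            simp [Fintype.card_perm, nsmul_eq_mul]
        _ = ∑ σ : Perm (Fin (r+1)), Sg σ * (∑ π : Perm (Fin (q+1)), Sg π * F (σ * J π)) := by
            rw [Finset.sum_comm]
            refine Finset.sum_congr rfl fun σ _ => ?_
            rw [Finset.mul_sum]
            exact Finset.sum_congr rfl fun π _ => by ring
        _ = 0 := Finset.sum_eq_zero fun σ _ => by rw [hdinner σ, mul_zero]
    have hfact : (((q+1).factorial : ℕ) : ℝ) ≠ 0 := Nat.cast_ne_zero.mpr (Nat.factorial_ne_zero _)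
    have hS : (∑ σ : Perm (Fin (r+1)), Sg σ * F σ) = 0 :=
      (mul_eq_zero.mp hzero).resolve_left hfact
    exact hS
  have hCT : C * T = 0 := by
    calc C * T
        = ∑ σ : Perm (Fin (r+1)), Sg σ *
            AA Ψ hqr q le_rfl (c (σ 0)) (fun b => c (σ b.succ)) ν := by
          rw [hT, Finset.mul_sum]
          refine Finset.sum_congr rfl fun σ _ => ?_
          rw [hCeq]
          ring
      _ = ∑ α : Perm (Fin r), ∑ β : Perm (Fin q), Sg α * Sg β *
            (∑ σ : Perm (Fin (r+1)), Sg σ *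
              Ψ (c (σ 0)) (colA q le_rfl α β (fun b => c (σ b.succ)) ν)
                (colB hqr q α β (fun b => c (σ b.succ)) ν)) := by
          unfold AA
          rw [Finset.sum_congr rfl fun σ (_ : σ ∈ Finset.univ) => Finset.mul_sum _ _ _]
          rw [Finset.sum_comm]
          refine Finset.sum_congr rfl fun α _ => ?_
          rw [Finset.sum_congr rfl fun σ (_ : σ ∈ Finset.univ) => Finset.mul_sum _ _ _]
          rw [Finset.sum_comm]
          refine Finset.sum_congr rfl fun β _ => ?_
          rw [Finset.mul_sum]
          exact Finset.sum_congr rfl fun σ _ => by ring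
      _ = 0 := Finset.sum_eq_zero fun α _ => Finset.sum_eq_zero fun β _ => by
          rw [hinner α β, mul_zero]
  exact (mul_eq_zero.mp hCT).resolve_left hC.ne'


/-! ### `pd` linearity lemmas -/

lemma pd_const_mul {D : ℕ} (ρ : Fin D) {f : (Fin D → ℝ) → ℝ} (hf : Differentiable ℝ f)
    (c : ℝ) (x : Fin D → ℝ) :
    pd ρ (fun y => c * f y) x = c * pd ρ f x := by
  unfold pd
  rw [fderiv_const_mul (hf x) c]
  simp

lemma pd_sum {D : ℕ} {n : Type*} [Fintype n] (ρ : Fin D) (f : n → (Fin D → ℝ) → ℝ)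
    (hf : ∀ σ, Differentiable ℝ (f σ)) (x : Fin D → ℝ) :
    pd ρ (fun y => ∑ σ : n, f σ y) x = ∑ σ : n, pd ρ (f σ) x := by
  unfold pd
  rw [fderiv_fun_sum fun σ _ => (hf σ) x]
  simp

lemma pd_zero {D : ℕ} (ρ : Fin D) (x : Fin D → ℝ) :
    pd ρ (fun _ : Fin D → ℝ => (0:ℝ)) x = 0 := by
  unfold pd
  simp [fderiv_const]


/-! ### Main theorem -/

/-- Lemma 1: for a differential hyperform `𝒫` of `Ω_{(s)}(ℝ^D)` (a smooth
tensor field irreducible under `GL(D,ℝ)` in the antisymmetric convention, with columns of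
nonincreasing lengths), `d_s 𝒫 = 0` implies `dᵢ 𝒫 = 0` for every `i ∈ {1,…,s}`. -/
theorem lemma_one {D s : ℕ} (hs : 0 < s) (ℓ : Fin s → ℕ)
    (hY : ∀ i j : Fin s, i ≤ j → ℓ j ≤ ℓ i)
    (P : TF D s ℓ)
    (hsmooth : ∀ v, ContDiff ℝ (⊤ : ℕ∞) (P v))
    (hcol : ColAntisym ℓ P)
    (hirr : SchurIrred ℓ P)
    (hlast : CurlZero ℓ P ⟨s - 1, by omega⟩) :
    ∀ i : Fin s, CurlZero ℓ P i := by
  classical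
  intro i
  have hjlt : s - 1 < s := by omega
  set j : Fin s := ⟨s - 1, hjlt⟩ with hjdef
  have hjval : (j : ℕ) = s - 1 := rfl
  have hlast' : CurlZero ℓ P j := hlast
  by_cases hij : i = j
  · rw [hij]; exact hlast'
  · have hijne : i ≠ j := hij
    have hivne : (i : ℕ) ≠ s - 1 := fun h => hijne (Fin.ext (h.trans hjval.symm))
    have hilt : i < j := by
      rw [Fin.lt_def, hjval]
      have := i.2
      omega
    have hqr : ℓ j ≤ ℓ i := hY i j hilt.le
    intro v ρ x
    set Ψ : Fin D → (Fin (ℓ i) → Fin D) → (Fin (ℓ j) → Fin D) → ℝ :=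
      fun ρ' μ ν => pd ρ' (P (Function.update (Function.update v i μ) j ν)) x with hΨ
    have hvi : ∀ (μ : Fin (ℓ i) → Fin D) (ν : Fin (ℓ j) → Fin D),
        (Function.update (Function.update v i μ) j ν) i = μ := by
      intro μ ν
      rw [Function.update_of_ne hijne, Function.update_self]
    have hvj : ∀ (μ : Fin (ℓ i) → Fin D) (ν : Fin (ℓ j) → Fin D),
        (Function.update (Function.update v i μ) j ν) j = ν := fun μ ν =>
      Function.update_self _ _ _
    have hcollapse : ∀ (μ X : Fin (ℓ i) → Fin D) (ν Y : Fin (ℓ j) → Fin D),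
        Function.update (Function.update (Function.update (Function.update v i μ) j ν) i X) j Y
          = Function.update (Function.update v i X) j Y := by
      intro μ X ν Y
      rw [Function.update_comm hijne.symm, Function.update_idem, Function.update_idem]
    -- block-1 antisymmetry of Ψ
    have h1 : ∀ (ρ' : Fin D) (σ : Perm (Fin (ℓ i))) (μ : Fin (ℓ i) → Fin D)
        (ν : Fin (ℓ j) → Fin D), Ψ ρ' (fun b => μ (σ b)) ν = Sg σ * Ψ ρ' μ ν := by
      intro ρ' σ μ ν
      have e : Function.update (Function.update (Function.update v i μ) j ν) i
            (fun a => (Function.update (Function.update v i μ) j ν) i (σ a))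
          = Function.update (Function.update v i (fun b => μ (σ b))) j ν := by
        rw [hvi μ ν, Function.update_comm hijne.symm, Function.update_idem]
      have hfun : P (Function.update (Function.update v i (fun b => μ (σ b))) j ν)
          = fun y => ((Equiv.Perm.sign σ : ℤ) : ℝ) *
              P (Function.update (Function.update v i μ) j ν) y := by
        funext y
        rw [← e]
        exact hcol i σ _ y
      rw [hΨ]
      simp only []
      rw [hfun, pd_const_mul _ ((hsmooth _).differentiable (by simp)) _ x]
      rfl
    -- block-2 antisymmetry of Ψ
    have h2 : ∀ (ρ' : Fin D) (μ : Fin (ℓ i) → Fin D) (σ : Perm (Fin (ℓ j)))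
        (ν : Fin (ℓ j) → Fin D), Ψ ρ' μ (fun b => ν (σ b)) = Sg σ * Ψ ρ' μ ν := by
      intro ρ' μ σ ν
      have e : Function.update (Function.update (Function.update v i μ) j ν) j
            (fun a => (Function.update (Function.update v i μ) j ν) j (σ a))
          = Function.update (Function.update v i μ) j (fun b => ν (σ b)) := by
        rw [hvj μ ν, Function.update_idem]
      have hfun : P (Function.update (Function.update v i μ) j (fun b => ν (σ b)))
          = fun y => ((Equiv.Perm.sign σ : ℤ) : ℝ) *
              P (Function.update (Function.update v i μ) j ν) y := by
        funext y
        rw [← e]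
        exact hcol j σ _ y
      rw [hΨ]
      simp only []
      rw [hfun, pd_const_mul _ ((hsmooth _).differentiable (by simp)) _ x]
      rfl
    -- packed Schur identity for Ψ
    have hpacked : ∀ (ρ' : Fin D) (a : Fin (ℓ j)) (μ : Fin (ℓ i) → Fin D)
        (ν : Fin (ℓ j) → Fin D),
        ∑ σ : Perm (Fin (ℓ i + 1)), Sg σ *
          Ψ ρ' (fun b => (Fin.snoc μ (ν a) : Fin (ℓ i + 1) → Fin D) (σ b.castSucc))
            (Function.update ν a ((Fin.snoc μ (ν a) : Fin (ℓ i + 1) → Fin D)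
              (σ (Fin.last (ℓ i))))) = 0 := by
      intro ρ' a μ ν
      have hargs : ∀ σ : Perm (Fin (ℓ i + 1)),
          Function.update (Function.update (Function.update (Function.update v i μ) j ν) i
              (fun b => (Fin.snoc ((Function.update (Function.update v i μ) j ν) i)
                ((Function.update (Function.update v i μ) j ν) j a) : Fin (ℓ i + 1) → Fin D)
                  (σ b.castSucc))) j
            (Function.update ((Function.update (Function.update v i μ) j ν) j) a
              ((Fin.snoc ((Function.update (Function.update v i μ) j ν) i)
                ((Function.update (Function.update v i μ) j ν) j a) : Fin (ℓ i + 1) → Fin D)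
                  (σ (Fin.last (ℓ i)))))
          = Function.update (Function.update v i
              (fun b => (Fin.snoc μ (ν a) : Fin (ℓ i + 1) → Fin D) (σ b.castSucc))) j
            (Function.update ν a ((Fin.snoc μ (ν a) : Fin (ℓ i + 1) → Fin D)
              (σ (Fin.last (ℓ i))))) := by
        intro σ
        rw [hvi μ ν, hvj μ ν]
        exact hcollapse μ _ ν _
      have hirr' := hirr i j hilt a (Function.update (Function.update v i μ) j ν)
      have hsum0 : (fun y => ∑ σ : Perm (Fin (ℓ i + 1)), Sg σ *
            P (Function.update (Function.update v i
                (fun b => (Fin.snoc μ (ν a) : Fin (ℓ i + 1) → Fin D) (σ b.castSucc))) j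
              (Function.update ν a ((Fin.snoc μ (ν a) : Fin (ℓ i + 1) → Fin D)
                (σ (Fin.last (ℓ i)))))) y)
          = fun _ : Fin D → ℝ => (0:ℝ) := by
        funext y
        calc ∑ σ : Perm (Fin (ℓ i + 1)), Sg σ *
              P (Function.update (Function.update v i
                  (fun b => (Fin.snoc μ (ν a) : Fin (ℓ i + 1) → Fin D) (σ b.castSucc))) j
                (Function.update ν a ((Fin.snoc μ (ν a) : Fin (ℓ i + 1) → Fin D)
                  (σ (Fin.last (ℓ i)))))) y
            = ∑ σ : Perm (Fin (ℓ i + 1)), ((Equiv.Perm.sign σ : ℤ) : ℝ) *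
              P (Function.update (Function.update (Function.update (Function.update v i μ) j ν) i
                  (fun b => (Fin.snoc ((Function.update (Function.update v i μ) j ν) i)
                    ((Function.update (Function.update v i μ) j ν) j a) : Fin (ℓ i + 1) → Fin D)
                      (σ b.castSucc))) j
                (Function.update ((Function.update (Function.update v i μ) j ν) j) a
                  ((Fin.snoc ((Function.update (Function.update v i μ) j ν) i)
                    ((Function.update (Function.update v i μ) j ν) j a) : Fin (ℓ i + 1) → Fin D)
                      (σ (Fin.last (ℓ i)))))) y :=
              Finset.sum_congr rfl fun σ _ => by rw [hargs σ]; rfl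
          _ = 0 := hirr' y
      calc ∑ σ : Perm (Fin (ℓ i + 1)), Sg σ *
            Ψ ρ' (fun b => (Fin.snoc μ (ν a) : Fin (ℓ i + 1) → Fin D) (σ b.castSucc))
              (Function.update ν a ((Fin.snoc μ (ν a) : Fin (ℓ i + 1) → Fin D)
                (σ (Fin.last (ℓ i)))))
          = ∑ σ : Perm (Fin (ℓ i + 1)), pd ρ' (fun y => Sg σ *
              P (Function.update (Function.update v i
                  (fun b => (Fin.snoc μ (ν a) : Fin (ℓ i + 1) → Fin D) (σ b.castSucc))) j
                (Function.update ν a ((Fin.snoc μ (ν a) : Fin (ℓ i + 1) → Fin D)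
                  (σ (Fin.last (ℓ i)))))) y) x := by
            refine Finset.sum_congr rfl fun σ _ => ?_
            rw [hΨ]
            simp only []
            rw [pd_const_mul _ ((hsmooth _).differentiable (by simp)) _ x]
        _ = pd ρ' (fun y => ∑ σ : Perm (Fin (ℓ i + 1)), Sg σ *
              P (Function.update (Function.update v i
                  (fun b => (Fin.snoc μ (ν a) : Fin (ℓ i + 1) → Fin D) (σ b.castSucc))) j
                (Function.update ν a ((Fin.snoc μ (ν a) : Fin (ℓ i + 1) → Fin D)
                  (σ (Fin.last (ℓ i)))))) y) x := by
            rw [pd_sum _ _ (fun σ => ((hsmooth _).differentiable (by simp)).const_mul _) x]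
        _ = 0 := by rw [hsum0]; exact pd_zero ρ' x
    have hschur : ∀ (ρ' : Fin D) (a : Fin (ℓ j)) (μ : Fin (ℓ i) → Fin D)
        (ν : Fin (ℓ j) → Fin D),
        Ψ ρ' μ ν = ∑ u : Fin (ℓ i), Ψ ρ' (Function.update μ u (ν a))
          (Function.update ν a (μ u)) :=
      fun ρ' a μ ν => unpack (Ψ ρ') (fun σ μ' ν' => h1 ρ' σ μ' ν')
        (fun a' μ' ν' => hpacked ρ' a' μ' ν') a μ ν
    -- the hypothesis d_s P = 0 for Ψ
    have hd2 : ∀ (c : Fin (ℓ j + 1) → Fin D) (μ : Fin (ℓ i) → Fin D),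
        ∑ π : Perm (Fin (ℓ j + 1)), Sg π * Ψ (c (π 0)) μ (fun b => c (π b.succ)) = 0 := by
      intro c μ
      have h := hlast' (Function.update (Function.update v i μ) j (Fin.tail c)) (c 0) x
      rw [show (Function.update (Function.update v i μ) j (Fin.tail c)) j = Fin.tail c from
        Function.update_self _ _ _] at h
      rw [Fin.cons_self_tail] at h
      calc ∑ π : Perm (Fin (ℓ j + 1)), Sg π * Ψ (c (π 0)) μ (fun b => c (π b.succ))
          = ∑ π : Perm (Fin (ℓ j + 1)), ((Equiv.Perm.sign π : ℤ) : ℝ) *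
            pd (c (π 0)) (P (Function.update
              (Function.update (Function.update v i μ) j (Fin.tail c)) j
                (fun b => c (π b.succ)))) x := by
            refine Finset.sum_congr rfl fun π _ => ?_
            rw [hΨ]
            simp only []
            rw [Function.update_idem]
            rfl
        _ = 0 := h
    -- conclusion via the abstract lemma
    have main := abstract_curl hqr Ψ h1 h2 hschur hd2 (Fin.cons ρ (v i)) (v j)
    have efix : ∀ f : Fin (ℓ i) → Fin D,
        Function.update (Function.update v i f) j (v j) = Function.update v i f := by
      intro f
      conv_lhs => rw [show v j = (Function.update v i f) j from
        (Function.update_of_ne hijne.symm _ _).symm]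
      exact Function.update_eq_self _ _
    refine Eq.trans (Finset.sum_congr rfl fun σ _ => ?_) main
    rw [hΨ]
    simp only []
    rw [efix]
    rfl

end Stmt12
end

section
/- Let $\mathcal{P}$ be a differential hyperform of $\Omega_{(s)}(\mathbb{R}^D)$ and $k\in\{1,\dots,s\}$. If $(\prod_{i=1}^{k} d_{s-k+i})\,\mathcal{P} = 0$ (i.e. the product of the last $k$ column differentials annihilates $\mathcal{P}$), then $(\prod_{i\in I} d_i)\,\mathcal{P} = 0$ for every subset $I\subset\{1,\dots,s\}$ with $\#I = k$. -/
namespace Stmt13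

/-- partial derivative `∂_μ` -/
noncomputable def pd {D : ℕ} (μ : Fin D) (f : (Fin D → ℝ) → ℝ) : (Fin D → ℝ) → ℝ :=
  fun x => fderiv ℝ f x (Pi.single μ 1)

lemma pd_smooth {D : ℕ} (μ : Fin D) {f : (Fin D → ℝ) → ℝ} (hf : ContDiff ℝ (⊤ : ℕ∞) f) :
    ContDiff ℝ (⊤ : ℕ∞) (pd μ f) := by
  have h := (hf.fderiv_right (m := (⊤ : ℕ∞)) (by simp))
  exact (ContinuousLinearMap.apply ℝ ℝ (Pi.single μ 1)).contDiff.comp h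

lemma pd_const_mul {D : ℕ} (μ : Fin D) (c : ℝ) {f : (Fin D → ℝ) → ℝ}
    (hf : Differentiable ℝ f) :
    pd μ (fun y => c * f y) = fun y => c * pd μ f y := by
  funext y
  simp [pd, fderiv_const_mul (hf y) c]

lemma pd_sum {D : ℕ} (μ : Fin D) {α : Type*} (A : Finset α) (f : α → (Fin D → ℝ) → ℝ)
    (hf : ∀ a ∈ A, Differentiable ℝ (f a)) :
    pd μ (fun y => ∑ a ∈ A, f a y) = fun y => ∑ a ∈ A, pd μ (f a) y := by
  funext y
  simp only [pd]
  rw [fderiv_fun_sum (fun a ha => (hf a ha) y)]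
  simp

lemma pd_comm {D : ℕ} (μ ν : Fin D) {f : (Fin D → ℝ) → ℝ} (hf : ContDiff ℝ (⊤ : ℕ∞) f) :
    pd μ (pd ν f) = pd ν (pd μ f) := by
  funext x
  have hsym : IsSymmSndFDerivAt ℝ f x :=
    (hf.contDiffAt).isSymmSndFDerivAt (by simp only [minSmoothness_of_isRCLikeNormedField]; exact WithTop.coe_le_coe.mpr le_top)
  have hdf : ∀ (w : Fin D → ℝ), DifferentiableAt ℝ (fderiv ℝ f) w := by
    intro w
    exact ((hf.fderiv_right (m := (⊤ : ℕ∞)) (by simp)).differentiable (by simp)) w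
  have key : ∀ (a : Fin D), pd a f = fun y => (fderiv ℝ f y) (Pi.single a 1) := fun _ => rfl
  have h1 : ∀ (a b : Fin D) (y : Fin D → ℝ),
      pd a (pd b f) y = fderiv ℝ (fderiv ℝ f) y (Pi.single a 1) (Pi.single b 1) := by
    intro a b y
    have hu : DifferentiableAt ℝ (fun _ : Fin D → ℝ => (Pi.single b 1 : Fin D → ℝ)) y :=
      differentiableAt_const _
    have : pd b f = fun z => (fderiv ℝ f z) (Pi.single b 1) := rfl
    rw [pd, this, fderiv_clm_apply (hdf y) hu]
    simp
  rw [h1, h1, hsym.eq]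

/-- iterated directional derivative -/
noncomputable def foldPd {D : ℕ} (l : List (Fin D)) (f : (Fin D → ℝ) → ℝ) : (Fin D → ℝ) → ℝ :=
  List.foldr (fun μ g => pd μ g) f l

@[simp] lemma foldPd_nil {D : ℕ} (f : (Fin D → ℝ) → ℝ) : foldPd [] f = f := rfl

@[simp] lemma foldPd_cons {D : ℕ} (d : Fin D) (l : List (Fin D)) (f : (Fin D → ℝ) → ℝ) :
    foldPd (d :: l) f = pd d (foldPd l f) := rfl

lemma foldPd_smooth {D : ℕ} (l : List (Fin D)) {f : (Fin D → ℝ) → ℝ} (hf : ContDiff ℝ (⊤ : ℕ∞) f) :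
    ContDiff ℝ (⊤ : ℕ∞) (foldPd l f) := by
  induction l with
  | nil => exact hf
  | cons d l ih => exact pd_smooth d ih

lemma foldPd_const_mul {D : ℕ} (l : List (Fin D)) (c : ℝ) {f : (Fin D → ℝ) → ℝ}
    (hf : ContDiff ℝ (⊤ : ℕ∞) f) :
    foldPd l (fun y => c * f y) = fun y => c * foldPd l f y := by
  induction l with
  | nil => rfl
  | cons d l ih =>
      simp only [foldPd_cons, ih]
      exact pd_const_mul d c ((foldPd_smooth l hf).differentiable (by simp))

lemma foldPd_sum {D : ℕ} (l : List (Fin D)) {α : Type*} (A : Finset α)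
    (f : α → (Fin D → ℝ) → ℝ) (hf : ∀ a ∈ A, ContDiff ℝ (⊤ : ℕ∞) (f a)) :
    foldPd l (fun y => ∑ a ∈ A, f a y) = fun y => ∑ a ∈ A, foldPd l (f a) y := by
  induction l with
  | nil => rfl
  | cons d l ih =>
      simp only [foldPd_cons, ih]
      exact pd_sum d A _ (fun a ha => ((foldPd_smooth l (hf a ha)).differentiable (by simp)))

lemma foldPd_perm {D : ℕ} {l l' : List (Fin D)} (h : l.Perm l') {f : (Fin D → ℝ) → ℝ}
    (hf : ContDiff ℝ (⊤ : ℕ∞) f) : foldPd l f = foldPd l' f := by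
  induction h with
  | nil => rfl
  | cons d _ ih => simp only [foldPd_cons, ih]
  | swap d e l => simp only [foldPd_cons]; exact (pd_comm d e (foldPd_smooth l hf)).symm
  | trans _ _ ih1 ih2 => rw [ih1, ih2]

/-- the key linearity principle: a vanishing linear combination of smooth functions stays
vanishing after applying iterated directional derivatives and evaluation. -/
lemma foldPd_lincomb {D : ℕ} (l : List (Fin D)) {α : Type*} (A : Finset α)
    (c : α → ℝ) (f : α → (Fin D → ℝ) → ℝ) (hf : ∀ a ∈ A, ContDiff ℝ (⊤ : ℕ∞) (f a))
    (h0 : ∀ y, ∑ a ∈ A, c a * f a y = 0) (x : Fin D → ℝ) :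
    ∑ a ∈ A, c a * foldPd l (f a) x = 0 := by
  have h1 : ∀ a ∈ A, foldPd l (fun y => c a * f a y) = fun y => c a * foldPd l (f a) y :=
    fun a ha => foldPd_const_mul l (c a) (hf a ha)
  have h2 : foldPd l (fun y => ∑ a ∈ A, c a * f a y) = fun y => ∑ a ∈ A, c a * foldPd l (f a) y := by
    rw [foldPd_sum l A (fun a y => c a * f a y)
      (fun a ha => (hf a ha).const_smul (c a))]
    funext y
    exact Finset.sum_congr rfl (fun a ha => by rw [h1 a ha])
  have h3 : (fun y : Fin D → ℝ => ∑ a ∈ A, c a * f a y) = fun _ => (0 : ℝ) := funext h0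
  have h4 := congrFun h2.symm x
  rw [h3] at h4
  have hz : ∀ l' : List (Fin D), foldPd l' (fun _ : Fin D → ℝ => (0:ℝ)) = fun _ => 0 := by
    intro l'
    induction l' with
    | nil => rfl
    | cons d l' ih => simp only [foldPd_cons, ih]; funext y; simp [pd]
  rw [hz] at h4
  exact h4

/-- components of a tensor field on `ℝ^D` whose `i`-th column carries `ℓ i`
antisymmetric indices. -/
abbrev TF (D s : ℕ) (ℓ : Fin s → ℕ) :=
  ((i : Fin s) → Fin (ℓ i) → Fin D) → (Fin D → ℝ) → ℝ

/-- complete antisymmetry in the indices of each column -/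
def ColAntisym {D s : ℕ} (ℓ : Fin s → ℕ) (P : TF D s ℓ) : Prop :=
  ∀ (i : Fin s) (σ : Equiv.Perm (Fin (ℓ i))) (v : (j : Fin s) → Fin (ℓ j) → Fin D)
    (x : Fin D → ℝ),
    P (Function.update v i (fun a => v i (σ a))) x = ((Equiv.Perm.sign σ : ℤ) : ℝ) * P v x

/-- irreducibility (antisymmetric convention). -/
def SchurIrred {D s : ℕ} (ℓ : Fin s → ℕ) (P : TF D s ℓ) : Prop :=
  ∀ (i j : Fin s), i < j → ∀ (a : Fin (ℓ j)) (v : (j' : Fin s) → Fin (ℓ j') → Fin D)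
    (x : Fin D → ℝ),
    (∑ σ : Equiv.Perm (Fin (ℓ i + 1)),
      ((Equiv.Perm.sign σ : ℤ) : ℝ) *
        P (Function.update
            (Function.update v i
              (fun b => (Fin.snoc (v i) (v j a) : Fin (ℓ i + 1) → Fin D) (σ b.castSucc)))
            j (Function.update (v j) a
              ((Fin.snoc (v i) (v j a) : Fin (ℓ i + 1) → Fin D) (σ (Fin.last (ℓ i)))))) x)
      = 0

/-- `(Π_{i ∈ I} dᵢ) P = 0`: the product of the column exterior derivatives over the
subset `I` annihilates `P` (componentwise: the simultaneous strength-one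
antisymmetrizations of one extra derivative index `ρ i` into each column `i ∈ I`
of `∂^{#I} P` vanish). -/
def MultiCurlZero {D s : ℕ} (ℓ : Fin s → ℕ) (P : TF D s ℓ) (I : Finset (Fin s)) : Prop :=
  ∀ (v : (j : Fin s) → Fin (ℓ j) → Fin D) (ρ : Fin s → Fin D) (x : Fin D → ℝ),
    (∑ σ : (k : {t // t ∈ I}) → Equiv.Perm (Fin (ℓ k.1 + 1)),
      (∏ k : {t // t ∈ I}, ((Equiv.Perm.sign (σ k) : ℤ) : ℝ)) *
        (List.foldr (fun μ g => pd μ g)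
          (P (fun j => if h : j ∈ I then
              (fun b => (Fin.cons (ρ j) (v j) : Fin (ℓ j + 1) → Fin D) ((σ ⟨j, h⟩) b.succ))
            else v j))
          (I.attach.toList.map
            (fun k => (Fin.cons (ρ k.1) (v k.1) : Fin (ℓ k.1 + 1) → Fin D) ((σ k) 0)))) x)
      = 0

/-- real-valued sign of a permutation -/
noncomputable def sgn {n : ℕ} (σ : Equiv.Perm (Fin n)) : ℝ := ((Equiv.Perm.sign σ : ℤ) : ℝ)

lemma sgn_mul_self {n : ℕ} (σ : Equiv.Perm (Fin n)) : sgn σ * sgn σ = 1 := by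
  unfold sgn
  rcases Int.units_eq_one_or (Equiv.Perm.sign σ) with h | h <;> rw [h] <;> norm_num

section Setup

variable {D s : ℕ} {ℓ : Fin s → ℕ}

/-- full families of column permutations -/
abbrev FP (ℓ : Fin s → ℕ) := (i : Fin s) → Equiv.Perm (Fin (ℓ i + 1))

variable (ℓ) in
/-- columns after substitution -/
def colsOf (J : Finset (Fin s)) (v : (j : Fin s) → Fin (ℓ j) → Fin D)
    (ρ : Fin s → Fin D) (σ : FP ℓ) : (j : Fin s) → Fin (ℓ j) → Fin D :=
  fun t => if _ : t ∈ J then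
      (fun b => (Fin.cons (ρ t) (v t) : Fin (ℓ t + 1) → Fin D) ((σ t) b.succ))
    else v t

variable (ℓ) in
/-- derivative directions -/
noncomputable def dirsOf (J : Finset (Fin s)) (v : (j : Fin s) → Fin (ℓ j) → Fin D)
    (ρ : Fin s → Fin D) (σ : FP ℓ) : List (Fin D) :=
  J.toList.map (fun t => (Fin.cons (ρ t) (v t) : Fin (ℓ t + 1) → Fin D) ((σ t) 0))

/-- normal form of the multi-curl sum, summing over full permutation families -/
noncomputable def CS (P : TF D s ℓ) (J : Finset (Fin s))
    (v : (j : Fin s) → Fin (ℓ j) → Fin D) (ρ : Fin s → Fin D) (x : Fin D → ℝ) : ℝ :=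
  ∑ σ : FP ℓ, (∏ t ∈ J, sgn (σ t)) * foldPd (dirsOf ℓ J v ρ σ) (P (colsOf ℓ J v ρ σ)) x

lemma map_toList_perm {α β : Type*} (J : Finset α) (f : α → β) :
    (J.attach.toList.map (fun k => f k.1)).Perm (J.toList.map f) := by
  rw [← Multiset.coe_eq_coe, ← Multiset.map_coe, ← Multiset.map_coe,
    Finset.coe_toList, Finset.coe_toList, Finset.attach_val]
  exact Multiset.attach_map_val' J.val f

end Setup

section Norm

variable {D s : ℕ} {ℓ : Fin s → ℕ}

/-- the literal multi-curl sum from the definition of `MultiCurlZero` -/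
noncomputable def MCsum (P : TF D s ℓ) (I : Finset (Fin s))
    (v : (j : Fin s) → Fin (ℓ j) → Fin D) (ρ : Fin s → Fin D) (x : Fin D → ℝ) : ℝ :=
  ∑ σ : (k : {t // t ∈ I}) → Equiv.Perm (Fin (ℓ k.1 + 1)),
      (∏ k : {t // t ∈ I}, ((Equiv.Perm.sign (σ k) : ℤ) : ℝ)) *
        (List.foldr (fun μ g => pd μ g)
          (P (fun j => if h : j ∈ I then
              (fun b => (Fin.cons (ρ j) (v j) : Fin (ℓ j + 1) → Fin D) ((σ ⟨j, h⟩) b.succ))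
            else v j))
          (I.attach.toList.map
            (fun k => (Fin.cons (ρ k.1) (v k.1) : Fin (ℓ k.1 + 1) → Fin D) ((σ k) 0)))) x

lemma mcz_iff_mcsum (P : TF D s ℓ) (I : Finset (Fin s)) :
    MultiCurlZero ℓ P I ↔ ∀ v ρ x, MCsum P I v ρ x = 0 := Iff.rfl

lemma cs_eq_mcsum (P : TF D s ℓ) (hsm : ∀ v, ContDiff ℝ (⊤ : ℕ∞) (P v)) (J : Finset (Fin s))
    (v : (j : Fin s) → Fin (ℓ j) → Fin D) (ρ : Fin s → Fin D) (x : Fin D → ℝ) :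
    CS P J v ρ x =
      (Fintype.card ((k : {t : Fin s // t ∉ J}) → Equiv.Perm (Fin (ℓ k.1 + 1))) : ℝ) *
        MCsum P J v ρ x := by
  classical
  set e := (Equiv.piEquivPiSubtypeProd (fun t : Fin s => t ∈ J)
    (fun t => Equiv.Perm (Fin (ℓ t + 1)))) with he
  unfold CS
  rw [← Equiv.sum_comp e.symm
    (fun σ => (∏ t ∈ J, sgn (σ t)) * foldPd (dirsOf ℓ J v ρ σ) (P (colsOf ℓ J v ρ σ)) x),
    Fintype.sum_prod_type]
  have key : ∀ (σJ : (k : {t // t ∈ J}) → Equiv.Perm (Fin (ℓ k.1 + 1)))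
      (σC : (k : {t : Fin s // t ∉ J}) → Equiv.Perm (Fin (ℓ k.1 + 1))),
      (∏ t ∈ J, sgn ((e.symm (σJ, σC)) t)) *
        foldPd (dirsOf ℓ J v ρ (e.symm (σJ, σC))) (P (colsOf ℓ J v ρ (e.symm (σJ, σC)))) x =
      (∏ k : {t // t ∈ J}, ((Equiv.Perm.sign (σJ k) : ℤ) : ℝ)) *
        (List.foldr (fun μ g => pd μ g)
          (P (fun j => if h : j ∈ J then
              (fun b => (Fin.cons (ρ j) (v j) : Fin (ℓ j + 1) → Fin D) ((σJ ⟨j, h⟩) b.succ))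
            else v j))
          (J.attach.toList.map
            (fun k => (Fin.cons (ρ k.1) (v k.1) : Fin (ℓ k.1 + 1) → Fin D) ((σJ k) 0)))) x := by
    intro σJ σC
    have hval : ∀ (t : Fin s) (h : t ∈ J), (e.symm (σJ, σC)) t = σJ ⟨t, h⟩ := by
      intro t h
      simp [he, Equiv.piEquivPiSubtypeProd_symm_apply, dif_pos h]
    have hcols : colsOf ℓ J v ρ (e.symm (σJ, σC)) = (fun j => if h : j ∈ J then
        (fun b => (Fin.cons (ρ j) (v j) : Fin (ℓ j + 1) → Fin D) ((σJ ⟨j, h⟩) b.succ))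
      else v j) := by
      funext t
      by_cases h : t ∈ J
      · simp only [colsOf, dif_pos h, hval t h]
      · simp only [colsOf, dif_neg h]
    have hsign : (∏ t ∈ J, sgn ((e.symm (σJ, σC)) t)) =
        ∏ k : {t // t ∈ J}, ((Equiv.Perm.sign (σJ k) : ℤ) : ℝ) := by
      rw [Finset.univ_eq_attach, ← Finset.prod_attach J (fun t => sgn ((e.symm (σJ, σC)) t))]
      exact Finset.prod_congr rfl (fun k _ => by rw [sgn, hval k.1 k.2])
    have hperm : (J.attach.toList.map
          (fun k => (Fin.cons (ρ k.1) (v k.1) : Fin (ℓ k.1 + 1) → Fin D) ((σJ k) 0))).Perm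
        (dirsOf ℓ J v ρ (e.symm (σJ, σC))) := by
      have : (fun (k : {t // t ∈ J}) =>
          (Fin.cons (ρ k.1) (v k.1) : Fin (ℓ k.1 + 1) → Fin D) ((σJ k) 0)) = fun k =>
          (fun t => (Fin.cons (ρ t) (v t) : Fin (ℓ t + 1) → Fin D) (((e.symm (σJ, σC)) t) 0)) k.1 := by
        funext k
        show (Fin.cons (ρ k.1) (v k.1) : Fin (ℓ k.1 + 1) → Fin D) ((σJ k) 0) =
          (Fin.cons (ρ k.1) (v k.1) : Fin (ℓ k.1 + 1) → Fin D) (((e.symm (σJ, σC)) k.1) 0)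
        rw [hval k.1 k.2]
      rw [this]
      unfold dirsOf
      exact map_toList_perm J
        (fun t => (Fin.cons (ρ t) (v t) : Fin (ℓ t + 1) → Fin D) (((e.symm (σJ, σC)) t) 0))
    rw [hsign, hcols, ← foldPd_perm hperm (hsm _)]
    rfl
  calc ∑ σJ, ∑ σC, (∏ t ∈ J, sgn ((e.symm (σJ, σC)) t)) *
        foldPd (dirsOf ℓ J v ρ (e.symm (σJ, σC))) (P (colsOf ℓ J v ρ (e.symm (σJ, σC)))) x
      = ∑ σJ : (k : {t // t ∈ J}) → Equiv.Perm (Fin (ℓ k.1 + 1)),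
        ∑ _σC : (k : {t : Fin s // t ∉ J}) → Equiv.Perm (Fin (ℓ k.1 + 1)),
          (∏ k : {t // t ∈ J}, ((Equiv.Perm.sign (σJ k) : ℤ) : ℝ)) *
        (List.foldr (fun μ g => pd μ g)
          (P (fun j => if h : j ∈ J then
              (fun b => (Fin.cons (ρ j) (v j) : Fin (ℓ j + 1) → Fin D) ((σJ ⟨j, h⟩) b.succ))
            else v j))
          (J.attach.toList.map
            (fun k => (Fin.cons (ρ k.1) (v k.1) : Fin (ℓ k.1 + 1) → Fin D) ((σJ k) 0)))) x := by
        exact Finset.sum_congr rfl (fun σJ _ => Finset.sum_congr rfl (fun σC _ => key σJ σC))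
    _ = _ := by
        rw [MCsum, Finset.mul_sum]
        exact Finset.sum_congr rfl (fun σJ _ => by
          rw [Finset.sum_const, nsmul_eq_mul]; rfl)

lemma mcz_iff_cs (P : TF D s ℓ) (hsm : ∀ v, ContDiff ℝ (⊤ : ℕ∞) (P v)) (J : Finset (Fin s)) :
    MultiCurlZero ℓ P J ↔ ∀ v ρ x, CS P J v ρ x = 0 := by
  rw [mcz_iff_mcsum]
  have hpos : (0:ℝ) < (Fintype.card ((k : {t : Fin s // t ∉ J}) →
      Equiv.Perm (Fin (ℓ k.1 + 1))) : ℝ) := by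
    exact_mod_cast Fintype.card_pos
  constructor
  · intro h v ρ x; rw [cs_eq_mcsum P hsm, h, mul_zero]
  · intro h v ρ x
    have := h v ρ x
    rw [cs_eq_mcsum P hsm] at this
    exact (mul_eq_zero.mp this).resolve_left (ne_of_gt hpos)

end Norm

section Marg

def margEquiv {s : ℕ} (M : Fin s → Type*) [∀ i, DecidableEq (M i)] (j : Fin s) :
    (((i : Fin s) → M i) × M j) ≃ (((i : Fin s) → M i) × M j) where
  toFun z := (Function.update z.1 j z.2, z.1 j)
  invFun z := (Function.update z.1 j z.2, z.1 j)
  left_inv := by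
    rintro ⟨σ, p⟩
    simp [Function.update_idem, Function.update_self, Function.update_eq_self]
  right_inv := by
    rintro ⟨σ, p⟩
    simp [Function.update_idem, Function.update_self, Function.update_eq_self]

lemma marg {s : ℕ} {M : Fin s → Type*} [∀ i, Fintype (M i)] [∀ i, DecidableEq (M i)] (j : Fin s)
    (G : M j → ((i : Fin s) → M i) → ℝ)
    (hG : ∀ p σ q, G p (Function.update σ j q) = G p σ) :
    (Fintype.card (M j) : ℝ) * ∑ σ : (i : Fin s) → M i, G (σ j) σ =
      ∑ σ : (i : Fin s) → M i, ∑ p : M j, G p σ := by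
  classical
  have h1 : ∑ σ : (i : Fin s) → M i, ∑ p : M j, G p σ
      = ∑ z : ((i : Fin s) → M i) × M j, G (z.1 j) z.1 := by
    have hsp : (∑ z : ((i : Fin s) → M i) × M j, G z.2 z.1)
        = ∑ σ : (i : Fin s) → M i, ∑ p : M j, G p σ :=
      Fintype.sum_prod_type (fun z : ((i : Fin s) → M i) × M j => G z.2 z.1)
    rw [← hsp]
    calc ∑ z : ((i : Fin s) → M i) × M j, G z.2 z.1
        = ∑ z : ((i : Fin s) → M i) × M j,
            (fun w : ((i : Fin s) → M i) × M j => G (w.1 j) w.1) (margEquiv M j z) := by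
          refine Fintype.sum_congr _ _ ?_
          rintro ⟨σ, p⟩
          show G p σ = G ((Function.update σ j p) j) (Function.update σ j p)
          rw [Function.update_self, hG]
      _ = _ := Equiv.sum_comp (margEquiv M j) (fun w => G (w.1 j) w.1)
  rw [h1, Fintype.sum_prod_type (fun z : ((i : Fin s) → M i) × M j => G (z.1 j) z.1)]
  rw [Finset.mul_sum]
  refine Finset.sum_congr rfl (fun σ _ => ?_)
  show (Fintype.card (M j) : ℝ) * G (σ j) σ = ∑ _p : M j, G (σ j) σ
  rw [Finset.sum_const, nsmul_eq_mul]
  rfl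

end Marg

section Helpers

variable {D s : ℕ} {ℓ : Fin s → ℕ} {J K : Finset (Fin s)} {j i : Fin s}
variable {v : (j : Fin s) → Fin (ℓ j) → Fin D} {ρ : Fin s → Fin D} {σ : FP ℓ}

lemma dirsOf_perm_erase (hj : j ∈ J) :
    (dirsOf ℓ J v ρ σ).Perm
      ((Fin.cons (ρ j) (v j) : Fin (ℓ j + 1) → Fin D) ((σ j) 0) ::
        dirsOf ℓ (J.erase j) v ρ σ) := by
  classical
  rw [← Multiset.coe_eq_coe]
  unfold dirsOf
  rw [← Multiset.cons_coe, ← Multiset.map_coe, ← Multiset.map_coe,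
    Finset.coe_toList, Finset.coe_toList, Finset.erase_val]
  have hjv : j ∈ J.val := hj
  conv_lhs => rw [← Multiset.cons_erase hjv]
  rw [Multiset.map_cons]

lemma colsOf_erase_update (hj : j ∈ J) :
    colsOf ℓ J v ρ σ = Function.update (colsOf ℓ (J.erase j) v ρ σ) j
      (fun b => (Fin.cons (ρ j) (v j) : Fin (ℓ j + 1) → Fin D) ((σ j) b.succ)) := by
  classical
  funext t
  by_cases h : t = j
  · subst h
    rw [Function.update_self]
    simp only [colsOf, dif_pos hj]
  · rw [Function.update_of_ne h]
    by_cases h2 : t ∈ J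
    · simp only [colsOf, dif_pos h2, dif_pos (Finset.mem_erase.mpr ⟨h, h2⟩)]
    · simp only [colsOf, dif_neg h2, dif_neg (fun hc => h2 (Finset.mem_of_mem_erase hc))]

lemma colsOf_indep (hj : j ∉ K) (q : Equiv.Perm (Fin (ℓ j + 1))) :
    colsOf ℓ K v ρ (Function.update σ j q) = colsOf ℓ K v ρ σ := by
  classical
  funext t
  by_cases h : t ∈ K
  · have ht : t ≠ j := fun hc => hj (hc ▸ h)
    simp only [colsOf, dif_pos h, Function.update_of_ne ht]
  · simp only [colsOf, dif_neg h]

lemma dirsOf_indep (hj : j ∉ K) (q : Equiv.Perm (Fin (ℓ j + 1))) :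
    dirsOf ℓ K v ρ (Function.update σ j q) = dirsOf ℓ K v ρ σ := by
  classical
  unfold dirsOf
  refine List.map_congr_left (fun t ht => ?_)
  have : t ∈ K := by rwa [Finset.mem_toList] at ht
  have ht' : t ≠ j := fun hc => hj (hc ▸ this)
  rw [Function.update_of_ne ht']

lemma colsOf_update_v (hi : i ∉ K) (u : Fin (ℓ i) → Fin D) :
    colsOf ℓ K (Function.update v i u) ρ σ = Function.update (colsOf ℓ K v ρ σ) i u := by
  classical
  funext t
  by_cases h : t = i
  · subst h
    rw [Function.update_self]
    simp only [colsOf, dif_neg hi, Function.update_self]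
  · rw [Function.update_of_ne h]
    by_cases h2 : t ∈ K
    · simp only [colsOf, dif_pos h2, Function.update_of_ne h]
    · simp only [colsOf, dif_neg h2, Function.update_of_ne h]

lemma colsOf_update_ρ (hj : j ∉ K) (d : Fin D) :
    colsOf ℓ K v (Function.update ρ j d) σ = colsOf ℓ K v ρ σ := by
  classical
  funext t
  by_cases h2 : t ∈ K
  · have ht : t ≠ j := fun hc => hj (hc ▸ h2)
    simp only [colsOf, dif_pos h2, Function.update_of_ne ht]
  · simp only [colsOf, dif_neg h2]

lemma dirsOf_update (hi : i ∉ K) (hj : j ∉ K) (u : Fin (ℓ i) → Fin D) (d : Fin D) :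
    dirsOf ℓ K (Function.update v i u) (Function.update ρ j d) σ = dirsOf ℓ K v ρ σ := by
  classical
  unfold dirsOf
  refine List.map_congr_left (fun t ht => ?_)
  have htK : t ∈ K := by rwa [Finset.mem_toList] at ht
  have h1 : t ≠ i := fun hc => hi (hc ▸ htK)
  have h2 : t ≠ j := fun hc => hj (hc ▸ htK)
  rw [Function.update_of_ne h1, Function.update_of_ne h2]

end Helpers

section Extract

variable {D s : ℕ} {ℓ : Fin s → ℕ}

lemma cs_extract (P : TF D s ℓ) (hsm : ∀ v, ContDiff ℝ (⊤ : ℕ∞) (P v)) {J : Finset (Fin s)} {j : Fin s}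
    (hj : j ∈ J) (v : (j : Fin s) → Fin (ℓ j) → Fin D) (ρ : Fin s → Fin D) (x : Fin D → ℝ) :
    (Fintype.card (Equiv.Perm (Fin (ℓ j + 1))) : ℝ) * CS P J v ρ x =
      ∑ σ : FP ℓ, ∑ p : Equiv.Perm (Fin (ℓ j + 1)),
        ((∏ t ∈ J.erase j, sgn (σ t)) * sgn p) *
          pd ((Fin.cons (ρ j) (v j) : Fin (ℓ j + 1) → Fin D) (p 0))
            (foldPd (dirsOf ℓ (J.erase j) v ρ σ)
              (P (Function.update (colsOf ℓ (J.erase j) v ρ σ) j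
                (fun b => (Fin.cons (ρ j) (v j) : Fin (ℓ j + 1) → Fin D) (p b.succ))))) x := by
  classical
  have hstep : ∀ σ : FP ℓ,
      (∏ t ∈ J, sgn (σ t)) * foldPd (dirsOf ℓ J v ρ σ) (P (colsOf ℓ J v ρ σ)) x =
      ((∏ t ∈ J.erase j, sgn (σ t)) * sgn (σ j)) *
        pd ((Fin.cons (ρ j) (v j) : Fin (ℓ j + 1) → Fin D) ((σ j) 0))
          (foldPd (dirsOf ℓ (J.erase j) v ρ σ)
            (P (Function.update (colsOf ℓ (J.erase j) v ρ σ) j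
              (fun b => (Fin.cons (ρ j) (v j) : Fin (ℓ j + 1) → Fin D) ((σ j) b.succ))))) x := by
    intro σ
    rw [← Finset.mul_prod_erase J _ hj, foldPd_perm (dirsOf_perm_erase hj) (hsm _),
      foldPd_cons, ← colsOf_erase_update hj]
    ring
  calc (Fintype.card (Equiv.Perm (Fin (ℓ j + 1))) : ℝ) * CS P J v ρ x
      = (Fintype.card (Equiv.Perm (Fin (ℓ j + 1))) : ℝ) * ∑ σ : FP ℓ,
          (fun (p : Equiv.Perm (Fin (ℓ j + 1))) (σ' : FP ℓ) =>
            ((∏ t ∈ J.erase j, sgn (σ' t)) * sgn p) *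
              pd ((Fin.cons (ρ j) (v j) : Fin (ℓ j + 1) → Fin D) (p 0))
                (foldPd (dirsOf ℓ (J.erase j) v ρ σ')
                  (P (Function.update (colsOf ℓ (J.erase j) v ρ σ') j
                    (fun b => (Fin.cons (ρ j) (v j) : Fin (ℓ j + 1) → Fin D) (p b.succ))))) x) (σ j) σ := by
        rw [CS]
        congr 1
        exact Finset.sum_congr rfl (fun σ _ => hstep σ)
    _ = _ := by
        have hmarg := marg (M := fun i => Equiv.Perm (Fin (ℓ i + 1))) j
          (fun (p : Equiv.Perm (Fin (ℓ j + 1))) (σ' : FP ℓ) =>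
            ((∏ t ∈ J.erase j, sgn (σ' t)) * sgn p) *
              pd ((Fin.cons (ρ j) (v j) : Fin (ℓ j + 1) → Fin D) (p 0))
                (foldPd (dirsOf ℓ (J.erase j) v ρ σ')
                  (P (Function.update (colsOf ℓ (J.erase j) v ρ σ') j
                    (fun b => (Fin.cons (ρ j) (v j) : Fin (ℓ j + 1) → Fin D) (p b.succ))))) x)
          ?_
        · exact hmarg
        · intro p σ q
          rw [colsOf_indep (Finset.notMem_erase j J) q, dirsOf_indep (Finset.notMem_erase j J) q]
          congr 2
          refine Finset.prod_congr rfl (fun t ht => ?_)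
          rw [Function.update_of_ne (Finset.ne_of_mem_erase ht)]

end Extract

section Ident

variable {D s : ℕ} {ℓ : Fin s → ℕ}

lemma sgn_mul {n : ℕ} (a b : Equiv.Perm (Fin n)) : sgn (a * b) = sgn a * sgn b := by
  unfold sgn
  rw [Equiv.Perm.sign_mul]
  push_cast
  ring

lemma hcol_strip (P : TF D s ℓ) (hcol : ColAntisym ℓ P) (j : Fin s)
    (π : Equiv.Perm (Fin (ℓ j))) (w : (t : Fin s) → Fin (ℓ t) → Fin D)
    (u : Fin (ℓ j) → Fin D) (x : Fin D → ℝ) :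
    P (Function.update w j (fun b => u (π b))) x = sgn π * P (Function.update w j u) x := by
  have h := hcol j π (Function.update w j u) x
  rw [Function.update_idem] at h
  have : (fun a => Function.update w j u j (π a)) = fun b => u (π b) := by
    funext b
    rw [Function.update_self]
  rw [this] at h
  exact h

lemma hirr_rot (P : TF D s ℓ) (hirr : SchurIrred ℓ P) {i j : Fin s} (hij : i < j)
    (a : Fin (ℓ j)) (e : Fin (ℓ i + 1) → Fin D) (w : (t : Fin s) → Fin (ℓ t) → Fin D)
    (x : Fin D → ℝ) :
    ∑ τ : Equiv.Perm (Fin (ℓ i + 1)), sgn τ *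
      P (Function.update (Function.update w i (fun b => e (τ b.succ))) j
          (Function.update (w j) a (e (τ 0)))) x = 0 := by
  classical
  have hne : i ≠ j := ne_of_lt hij
  set v'' : (t : Fin s) → Fin (ℓ t) → Fin D :=
    Function.update (Function.update w i (fun b => e b.castSucc)) j
      (Function.update (w j) a (e (Fin.last (ℓ i)))) with hv''
  have hvi : v'' i = fun b => e b.castSucc := by
    rw [hv'', Function.update_of_ne hne, Function.update_self]
  have hvj : v'' j = Function.update (w j) a (e (Fin.last (ℓ i))) := by
    rw [hv'', Function.update_self]
  have hsnoc : (Fin.snoc (v'' i) (v'' j a) : Fin (ℓ i + 1) → Fin D) = e := by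
    rw [hvi, hvj, Function.update_self]
    funext c
    refine Fin.lastCases ?_ (fun b => ?_) c
    · rw [Fin.snoc_last]
    · rw [Fin.snoc_castSucc]
  have h := hirr i j hij a v'' x
  rw [hsnoc] at h
  have harg : ∀ σ : Equiv.Perm (Fin (ℓ i + 1)),
      Function.update (Function.update v'' i (fun b => e (σ b.castSucc))) j
          (Function.update (v'' j) a (e (σ (Fin.last (ℓ i))))) =
      Function.update (Function.update w i (fun b => e (σ b.castSucc))) j
          (Function.update (w j) a (e (σ (Fin.last (ℓ i))))) := by
    intro σ
    funext t
    by_cases ht : t = j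
    · subst ht
      rw [Function.update_self, Function.update_self, hvj, Function.update_idem]
    · rw [Function.update_of_ne ht, Function.update_of_ne ht]
      by_cases ht2 : t = i
      · subst ht2
        rw [Function.update_self, Function.update_self]
      · rw [Function.update_of_ne ht2, Function.update_of_ne ht2, hv'',
          Function.update_of_ne ht, Function.update_of_ne ht2]
  simp only [harg] at h
  -- reindex by right multiplication with finRotate
  have hre := Equiv.sum_comp (Equiv.mulRight (finRotate (ℓ i + 1)))
    (fun σ : Equiv.Perm (Fin (ℓ i + 1)) => sgn σ *
      P (Function.update (Function.update w i (fun b => e (σ b.castSucc))) j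
          (Function.update (w j) a (e (σ (Fin.last (ℓ i)))))) x)
  have hre' : (∑ τ : Equiv.Perm (Fin (ℓ i + 1)),
      (fun σ : Equiv.Perm (Fin (ℓ i + 1)) => sgn σ *
        P (Function.update (Function.update w i (fun b : Fin (ℓ i) => e (σ b.castSucc))) j
            (Function.update (w j) a (e (σ (Fin.last (ℓ i)))))) x)
        ((Equiv.mulRight (finRotate (ℓ i + 1))) τ)) = 0 := hre.trans h
  clear hre
  have hre := hre' 
  have hterm : ∀ τ : Equiv.Perm (Fin (ℓ i + 1)),
      (fun σ : Equiv.Perm (Fin (ℓ i + 1)) => sgn σ *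
        P (Function.update (Function.update w i (fun b => e (σ b.castSucc))) j
            (Function.update (w j) a (e (σ (Fin.last (ℓ i)))))) x)
        ((Equiv.mulRight (finRotate (ℓ i + 1))) τ) =
      ((-1 : ℝ) ^ (ℓ i)) * (sgn τ *
        P (Function.update (Function.update w i (fun b => e (τ b.succ))) j
            (Function.update (w j) a (e (τ 0)))) x) := by
    intro τ
    have h1 : ∀ b : Fin (ℓ i), (τ * finRotate (ℓ i + 1)) b.castSucc = τ b.succ := by
      intro b
      rw [Equiv.Perm.mul_apply, finRotate_succ_apply, Fin.coeSucc_eq_succ]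
    have h2 : (τ * finRotate (ℓ i + 1)) (Fin.last (ℓ i)) = τ 0 := by
      rw [Equiv.Perm.mul_apply, finRotate_last]
    have h3 : sgn (τ * finRotate (ℓ i + 1)) = sgn τ * ((-1 : ℝ) ^ (ℓ i)) := by
      rw [sgn_mul]
      congr 1
      unfold sgn
      rw [sign_finRotate]
      push_cast
      ring
    show sgn (τ * finRotate (ℓ i + 1)) *
        P (Function.update (Function.update w i
            (fun b : Fin (ℓ i) => e ((τ * finRotate (ℓ i + 1)) b.castSucc))) j
          (Function.update (w j) a (e ((τ * finRotate (ℓ i + 1)) (Fin.last (ℓ i)))))) x = _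
    rw [h2, h3]
    have : (fun b : Fin (ℓ i) => e ((τ * finRotate (ℓ i + 1)) b.castSucc)) =
        fun b : Fin (ℓ i) => e (τ b.succ) := by
      funext b
      rw [h1]
    rw [this]
    ring
  rw [Finset.sum_congr rfl (fun τ _ => hterm τ), ← Finset.mul_sum] at hre
  rcases mul_eq_zero.mp hre with hc | hval
  · exfalso
    have : ((-1 : ℝ) ^ (ℓ i)) ≠ 0 := by
      apply pow_ne_zero
      norm_num
    exact this hc
  · exact hval

end Ident

section Exchange

variable {D s : ℕ} {ℓ : Fin s → ℕ}

lemma decompose_col_zero {D m : ℕ} (c : Fin (m + 1) → Fin D) (π : Equiv.Perm (Fin m)) :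
    (fun b => c ((Equiv.Perm.decomposeFin.symm (0, π)) b.succ)) =
      fun b => c ((π b).succ) := by
  funext b
  rw [Equiv.Perm.decomposeFin_symm_apply_succ, Equiv.swap_self]
  rfl

lemma decompose_col_succ {D m : ℕ} (c : Fin (m + 1) → Fin D) (a : Fin m)
    (π : Equiv.Perm (Fin m)) :
    (fun b => c ((Equiv.Perm.decomposeFin.symm (a.succ, π)) b.succ)) =
      fun b => (Function.update (fun b' => c b'.succ) a (c 0)) (π b) := by
  funext b
  rw [Equiv.Perm.decomposeFin_symm_apply_succ]
  by_cases hb : π b = a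
  · rw [hb, Function.update_self, Equiv.swap_apply_right]
  · rw [Function.update_of_ne hb,
      Equiv.swap_apply_of_ne_of_ne (Fin.succ_ne_zero _) (fun hc => hb (Fin.succ_inj.mp hc))]

lemma sgn_decompose_zero {m : ℕ} (π : Equiv.Perm (Fin m)) :
    sgn (Equiv.Perm.decomposeFin.symm (0, π)) = sgn π := by
  unfold sgn
  rw [Equiv.Perm.decomposeFin.symm_sign, if_pos rfl, one_mul]

lemma sgn_decompose_succ {m : ℕ} (a : Fin m) (π : Equiv.Perm (Fin m)) :
    sgn (Equiv.Perm.decomposeFin.symm (a.succ, π)) = -sgn π := by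
  unfold sgn
  rw [Equiv.Perm.decomposeFin.symm_sign, if_neg (Fin.succ_ne_zero a)]
  push_cast
  ring

lemma colsOf_not_mem {J : Finset (Fin s)} {j : Fin s}
    {v : (j : Fin s) → Fin (ℓ j) → Fin D} {ρ : Fin s → Fin D} {σ : FP ℓ} (hj : j ∉ J) :
    colsOf ℓ J v ρ σ j = v j := by
  simp only [colsOf, dif_neg hj]

lemma exchange (P : TF D s ℓ) (hsm : ∀ v, ContDiff ℝ (⊤ : ℕ∞) (P v)) (hcol : ColAntisym ℓ P)
    (hirr : SchurIrred ℓ P) {K : Finset (Fin s)} {i j : Fin s}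
    (hiK : i ∉ K) (hjK : j ∉ K) (hij : i < j)
    (h : MultiCurlZero ℓ P (insert j K)) :
    MultiCurlZero ℓ P (insert i K) := by
  classical
  rw [mcz_iff_cs P hsm] at h ⊢
  intro v ρ x
  have hine : i ≠ j := ne_of_lt hij
  set e : Fin (ℓ i + 1) → Fin D := Fin.cons (ρ i) (v i) with he
  -- abbreviations (as plain defs of the proof)
  set wtK : FP ℓ → ℝ := fun σ => ∏ t ∈ K, sgn (σ t) with hwtK
  -- the target term
  set G : FP ℓ → Equiv.Perm (Fin (ℓ i + 1)) → ℝ := fun σ τ =>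
    (wtK σ * sgn τ) *
      pd (e (τ 0))
        (foldPd (dirsOf ℓ K v ρ σ)
          (P (Function.update (colsOf ℓ K v ρ σ) i (fun b => e (τ b.succ))))) x with hG
  -- the hypothesis-side term
  set T : FP ℓ → Equiv.Perm (Fin (ℓ i + 1)) → Equiv.Perm (Fin (ℓ j + 1)) → ℝ := fun σ τ p =>
    sgn τ * ((wtK σ) * sgn p) *
      pd ((Fin.cons (e (τ 0)) (v j) : Fin (ℓ j + 1) → Fin D) (p 0))
        (foldPd (dirsOf ℓ K v ρ σ)
          (P (Function.update
            (Function.update (colsOf ℓ K v ρ σ) i (fun b => e (τ b.succ))) j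
            (fun b => (Fin.cons (e (τ 0)) (v j) : Fin (ℓ j + 1) → Fin D) (p b.succ))))) x
    with hT
  -- Step 1: goal-side extraction
  have hgoal := cs_extract P hsm (Finset.mem_insert_self i K) v ρ x
  rw [Finset.erase_insert hiK] at hgoal
  -- Step 2: hypothesis-side extraction
  have hhyp : ∀ τ : Equiv.Perm (Fin (ℓ i + 1)),
      (0:ℝ) = ∑ σ : FP ℓ, ∑ p : Equiv.Perm (Fin (ℓ j + 1)), T σ τ p := by
    intro τ
    have h2 := cs_extract P hsm (Finset.mem_insert_self j K)
      (Function.update v i (fun b => e (τ b.succ))) (Function.update ρ j (e (τ 0))) x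
    rw [Finset.erase_insert hjK, h _ _ x, mul_zero] at h2
    have hvj : Function.update v i (fun b => e (τ b.succ)) j = v j :=
      Function.update_of_ne (Ne.symm hine) _ _
    have hρj : Function.update ρ j (e (τ 0)) j = e (τ 0) := Function.update_self _ _ _
    simp only [hvj, hρj, dirsOf_update hiK hjK, colsOf_update_ρ hjK,
      colsOf_update_v hiK] at h2
    simp only [hT]
    calc (0:ℝ) = sgn τ * 0 := (mul_zero _).symm
      _ = _ := by
          rw [h2, Finset.mul_sum]
          refine Finset.sum_congr rfl (fun σ _ => ?_)
          rw [Finset.mul_sum]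
          refine Finset.sum_congr rfl (fun p _ => ?_)
          rw [hwtK]
          ring
  -- Step 3: vanishing of the shifted blocks
  have hvanish : ∀ (σ : FP ℓ) (a : Fin (ℓ j)) (π : Equiv.Perm (Fin (ℓ j))),
      ∑ τ : Equiv.Perm (Fin (ℓ i + 1)),
        T σ τ (Equiv.Perm.decomposeFin.symm (a.succ, π)) = 0 := by
    intro σ a π
    have hterm : ∀ τ : Equiv.Perm (Fin (ℓ i + 1)),
        T σ τ (Equiv.Perm.decomposeFin.symm (a.succ, π)) =
        (-(wtK σ)) * (sgn τ * foldPd ((v j a) :: dirsOf ℓ K v ρ σ)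
          (P (Function.update
            (Function.update (colsOf ℓ K v ρ σ) i (fun b => e (τ b.succ))) j
            (Function.update (v j) a (e (τ 0))))) x) := by
      intro τ
      simp only [hT]
      rw [Equiv.Perm.decomposeFin_symm_apply_zero, sgn_decompose_succ,
        decompose_col_succ (Fin.cons (e (τ 0)) (v j)) a π, Fin.cons_succ]
      have hcc : (fun b' : Fin (ℓ j) =>
          (Fin.cons (e (τ 0)) (v j) : Fin (ℓ j + 1) → Fin D) b'.succ) = v j := by
        funext b'; rw [Fin.cons_succ]
      rw [hcc, Fin.cons_zero]
      have hstrip : P (Function.update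
            (Function.update (colsOf ℓ K v ρ σ) i (fun b => e (τ b.succ))) j
            (fun b => (Function.update (v j) a (e (τ 0))) (π b))) =
          fun y => sgn π * P (Function.update
            (Function.update (colsOf ℓ K v ρ σ) i (fun b => e (τ b.succ))) j
            (Function.update (v j) a (e (τ 0)))) y := by
        funext y
        exact hcol_strip P hcol j π _ _ y
      rw [hstrip, foldPd_const_mul _ _ (hsm _),
        pd_const_mul _ _ ((foldPd_smooth _ (hsm _)).differentiable (by simp)), foldPd_cons]
      simp only []
      linear_combination (-(sgn τ * wtK σ * pd (v j a) (foldPd (dirsOf ℓ K v ρ σ)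
        (P (Function.update
          (Function.update (colsOf ℓ K v ρ σ) i (fun b => e (τ b.succ))) j
          (Function.update (v j) a (e (τ 0)))))) x)) * sgn_mul_self π
    rw [Finset.sum_congr rfl (fun τ _ => hterm τ), ← Finset.mul_sum,
      foldPd_lincomb ((v j a) :: dirsOf ℓ K v ρ σ) Finset.univ sgn
        (fun τ => P (Function.update
          (Function.update (colsOf ℓ K v ρ σ) i (fun b => e (τ b.succ))) j
          (Function.update (v j) a (e (τ 0)))))
        (fun τ _ => hsm _) ?_ x, mul_zero]
    intro y
    have h3 := hirr_rot P hirr hij a e (colsOf ℓ K v ρ σ) y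
    rwa [colsOf_not_mem hjK] at h3
  -- Step 4: the zero block produces the target term
  have hsplit : ∀ (σ : FP ℓ) (τ : Equiv.Perm (Fin (ℓ i + 1))),
      (∑ p : Equiv.Perm (Fin (ℓ j + 1)), T σ τ p) =
      (Fintype.card (Equiv.Perm (Fin (ℓ j))) : ℝ) * G σ τ +
        ∑ a : Fin (ℓ j), ∑ π : Equiv.Perm (Fin (ℓ j)),
          T σ τ (Equiv.Perm.decomposeFin.symm (a.succ, π)) := by
    intro σ τ
    have h1 : (∑ p : Equiv.Perm (Fin (ℓ j + 1)), T σ τ p) =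
        ∑ z : Fin (ℓ j + 1) × Equiv.Perm (Fin (ℓ j)),
          T σ τ (Equiv.Perm.decomposeFin.symm z) :=
      (Equiv.sum_comp Equiv.Perm.decomposeFin.symm (T σ τ)).symm
    rw [h1, Fintype.sum_prod_type
      (fun z : Fin (ℓ j + 1) × Equiv.Perm (Fin (ℓ j)) => T σ τ (Equiv.Perm.decomposeFin.symm z)),
      Fin.sum_univ_succ]
    congr 1
    have h0 : ∀ π : Equiv.Perm (Fin (ℓ j)),
        T σ τ (Equiv.Perm.decomposeFin.symm (0, π)) = G σ τ := by
      intro π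
      simp only [hT, hG]
      rw [Equiv.Perm.decomposeFin_symm_apply_zero, sgn_decompose_zero,
        decompose_col_zero (Fin.cons (e (τ 0)) (v j)) π, Fin.cons_zero]
      have hcc : (fun b : Fin (ℓ j) =>
          (Fin.cons (e (τ 0)) (v j) : Fin (ℓ j + 1) → Fin D) ((π b).succ)) =
          fun b => v j (π b) := by
        funext b; rw [Fin.cons_succ]
      rw [hcc]
      have hW : Function.update (colsOf ℓ K v ρ σ) i (fun b => e (τ b.succ)) j = v j := by
        rw [Function.update_of_ne (Ne.symm hine), colsOf_not_mem hjK]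
      have heq : Function.update
          (Function.update (colsOf ℓ K v ρ σ) i (fun b => e (τ b.succ))) j (v j) =
          Function.update (colsOf ℓ K v ρ σ) i (fun b => e (τ b.succ)) := by
        rw [← hW]
        exact Function.update_eq_self _ _
      have hstrip : P (Function.update
            (Function.update (colsOf ℓ K v ρ σ) i (fun b => e (τ b.succ))) j
            (fun b => v j (π b))) =
          fun y => sgn π *
            P (Function.update (colsOf ℓ K v ρ σ) i (fun b => e (τ b.succ))) y := by
        funext y
        have hh := hcol_strip P hcol j π
          (Function.update (colsOf ℓ K v ρ σ) i (fun b => e (τ b.succ))) (v j) y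
        rw [heq] at hh
        exact hh
      rw [hstrip, foldPd_const_mul _ _ (hsm _),
        pd_const_mul _ _ ((foldPd_smooth _ (hsm _)).differentiable (by simp))]
      simp only []
      linear_combination (wtK σ * sgn τ * pd (e (τ 0)) (foldPd (dirsOf ℓ K v ρ σ)
        (P (Function.update (colsOf ℓ K v ρ σ) i (fun b => e (τ b.succ))))) x) * sgn_mul_self π
    rw [Finset.sum_congr rfl (fun π _ => h0 π), Finset.sum_const, nsmul_eq_mul]
    rfl
  -- Step 5: master identity
  have hmaster : (0:ℝ) =
      (Fintype.card (Equiv.Perm (Fin (ℓ j))) : ℝ) * ∑ σ : FP ℓ,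
        ∑ τ : Equiv.Perm (Fin (ℓ i + 1)), G σ τ := by
    calc (0:ℝ) = ∑ _τ : Equiv.Perm (Fin (ℓ i + 1)), (0:ℝ) := by
          rw [Finset.sum_const, smul_zero]
      _ = ∑ τ : Equiv.Perm (Fin (ℓ i + 1)), ∑ σ : FP ℓ,
            ∑ p : Equiv.Perm (Fin (ℓ j + 1)), T σ τ p :=
          Finset.sum_congr rfl (fun τ _ => hhyp τ)
      _ = ∑ σ : FP ℓ, ∑ τ : Equiv.Perm (Fin (ℓ i + 1)),
            ∑ p : Equiv.Perm (Fin (ℓ j + 1)), T σ τ p := Finset.sum_comm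
      _ = ∑ σ : FP ℓ, ∑ τ : Equiv.Perm (Fin (ℓ i + 1)),
            ((Fintype.card (Equiv.Perm (Fin (ℓ j))) : ℝ) * G σ τ +
              ∑ a : Fin (ℓ j), ∑ π : Equiv.Perm (Fin (ℓ j)),
                T σ τ (Equiv.Perm.decomposeFin.symm (a.succ, π))) :=
          Finset.sum_congr rfl (fun σ _ =>
            Finset.sum_congr rfl (fun τ _ => hsplit σ τ))
      _ = (∑ σ : FP ℓ, ∑ τ : Equiv.Perm (Fin (ℓ i + 1)),
            (Fintype.card (Equiv.Perm (Fin (ℓ j))) : ℝ) * G σ τ) +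
          ∑ σ : FP ℓ, ∑ τ : Equiv.Perm (Fin (ℓ i + 1)),
            ∑ a : Fin (ℓ j), ∑ π : Equiv.Perm (Fin (ℓ j)),
              T σ τ (Equiv.Perm.decomposeFin.symm (a.succ, π)) := by
          rw [← Finset.sum_add_distrib]
          exact Finset.sum_congr rfl (fun σ _ => Finset.sum_add_distrib)
      _ = (Fintype.card (Equiv.Perm (Fin (ℓ j))) : ℝ) *
            (∑ σ : FP ℓ, ∑ τ : Equiv.Perm (Fin (ℓ i + 1)), G σ τ) + 0 := by
          congr 1
          · rw [Finset.mul_sum]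
            exact Finset.sum_congr rfl (fun σ _ => (Finset.mul_sum _ _ _).symm)
          · rw [← Finset.sum_const_zero (s := (Finset.univ : Finset (FP ℓ)))]
            refine Finset.sum_congr rfl (fun σ _ => ?_)
            rw [Finset.sum_comm]
            rw [← Finset.sum_const_zero
              (s := (Finset.univ : Finset (Fin (ℓ j))))]
            refine Finset.sum_congr rfl (fun a _ => ?_)
            rw [Finset.sum_comm]
            rw [← Finset.sum_const_zero
              (s := (Finset.univ : Finset (Equiv.Perm (Fin (ℓ j)))))]
            exact Finset.sum_congr rfl (fun π _ => hvanish σ a π)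
      _ = _ := by rw [add_zero]
  -- Step 6: conclude
  have hGzero : (∑ σ : FP ℓ, ∑ τ : Equiv.Perm (Fin (ℓ i + 1)), G σ τ) = 0 := by
    rcases mul_eq_zero.mp hmaster.symm with hc | hval
    · exfalso
      have : (Fintype.card (Equiv.Perm (Fin (ℓ j))) : ℝ) ≠ 0 := by
        exact_mod_cast Fintype.card_pos.ne'
      exact this hc
    · exact hval
  have hmatch : (∑ σ : FP ℓ, ∑ τ : Equiv.Perm (Fin (ℓ i + 1)), G σ τ) =
      ∑ σ : FP ℓ, ∑ p : Equiv.Perm (Fin (ℓ i + 1)),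
        ((∏ t ∈ K, sgn (σ t)) * sgn p) *
          pd ((Fin.cons (ρ i) (v i) : Fin (ℓ i + 1) → Fin D) (p 0))
            (foldPd (dirsOf ℓ K v ρ σ)
              (P (Function.update (colsOf ℓ K v ρ σ) i
                (fun b => (Fin.cons (ρ i) (v i) : Fin (ℓ i + 1) → Fin D) (p b.succ))))) x := by
    refine Finset.sum_congr rfl (fun σ _ => Finset.sum_congr rfl (fun p _ => ?_))
    simp only [hG, hwtK, he]
  rw [hmatch] at hGzero
  rw [hGzero] at hgoal
  rcases mul_eq_zero.mp hgoal with hc | hval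
  · exfalso
    have : (Fintype.card (Equiv.Perm (Fin (ℓ i + 1))) : ℝ) ≠ 0 := by
      exact_mod_cast Fintype.card_pos.ne'
    exact this hc
  · exact hval

end Exchange

lemma lastk_card {s k : ℕ} (hks : k ≤ s) :
    (Finset.univ.filter (fun i : Fin s => s - k ≤ (i : ℕ))).card = k := by
  classical
  have himg : Finset.univ.filter (fun i : Fin s => s - k ≤ (i : ℕ)) =
      (Finset.univ : Finset (Fin k)).image
        (fun a : Fin k => (⟨s - k + a.1, by have := a.2; omega⟩ : Fin s)) := by
    ext t
    simp only [Finset.mem_filter, Finset.mem_univ, true_and, Finset.mem_image]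
    constructor
    · intro ht
      have h2 := t.2
      refine ⟨⟨t.1 - (s - k), by omega⟩, ?_⟩
      apply Fin.ext
      simp only []
      omega
    · rintro ⟨a, rfl⟩
      simp only []
      omega
  rw [himg, Finset.card_image_of_injective _ ?_, Finset.card_univ, Fintype.card_fin]
  intro a b hab
  have hv : s - k + a.1 = s - k + b.1 := congrArg Fin.val hab
  exact Fin.ext (by omega)

/-- if the product of the last `k` column differentials annihilates the
hyperform `𝒫`, then `(Π_{i∈I} dᵢ) 𝒫 = 0` for every subset `I ⊂ {1,…,s}` with `#I = k`. -/
theorem multi_curl_corollary {D s : ℕ} (ℓ : Fin s → ℕ)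
    (hY : ∀ i j : Fin s, i ≤ j → ℓ j ≤ ℓ i)
    (P : TF D s ℓ)
    (hsmooth : ∀ v, ContDiff ℝ (⊤ : ℕ∞) (P v))
    (hcol : ColAntisym ℓ P)
    (hirr : SchurIrred ℓ P)
    (k : ℕ) (hk : 1 ≤ k) (hks : k ≤ s)
    (hlast : MultiCurlZero ℓ P (Finset.univ.filter (fun i : Fin s => s - k ≤ (i : ℕ)))) :
    ∀ I : Finset (Fin s), I.card = k → MultiCurlZero ℓ P I := by

  classical
  set lastk := Finset.univ.filter (fun i : Fin s => s - k ≤ (i : ℕ)) with hlk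
  have main : ∀ n (I : Finset (Fin s)), I.card = k →
      (∑ t ∈ I, (s - 1 - t.1)) = n → MultiCurlZero ℓ P I := by
    intro n
    induction n using Nat.strong_induction_on with
    | _ n IH =>
      intro I hcard hμ
      by_cases hI : I = lastk
      · rw [hI]; exact hlast
      · have hex : ∃ i' ∈ I, (i' : ℕ) < s - k := by
          by_contra hno
          push_neg at hno
          apply hI
          refine Finset.eq_of_subset_of_card_le (fun t ht => ?_) ?_
          · exact Finset.mem_filter.mpr ⟨Finset.mem_univ t, hno t ht⟩
          · rw [hlk, lastk_card hks, hcard]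
        obtain ⟨i', hi'I, hi'lt⟩ := hex
        have hjex : ∃ jj ∈ lastk, jj ∉ I := by
          by_contra hno
          push_neg at hno
          have hsub : lastk ⊆ I := fun t ht => hno t ht
          have heq : lastk = I :=
            Finset.eq_of_subset_of_card_le hsub (by rw [hcard, hlk, lastk_card hks])
          have : i' ∈ lastk := heq ▸ hi'I
          have := (Finset.mem_filter.mp this).2
          omega
        obtain ⟨jj, hjlast, hjI⟩ := hjex
        have hjge : s - k ≤ (jj : ℕ) := (Finset.mem_filter.mp hjlast).2
        have hij : i' < jj := by
          rw [Fin.lt_def]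
          omega
        have hi'er : i' ∉ I.erase i' := Finset.notMem_erase _ _
        have hjer : jj ∉ I.erase i' := fun hc => hjI (Finset.mem_of_mem_erase hc)
        have hcardJ : (insert jj (I.erase i')).card = k := by
          rw [Finset.card_insert_of_notMem hjer, Finset.card_erase_of_mem hi'I, hcard]
          omega
        have hμJ : (∑ t ∈ insert jj (I.erase i'), (s - 1 - t.1)) < n := by
          rw [← hμ, Finset.sum_insert hjer, ← Finset.add_sum_erase I _ hi'I]
          have h1 : (jj : ℕ) < s := jj.2
          have h2 : (i' : ℕ) < (jj : ℕ) := hij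
          omega
        have hJ : MultiCurlZero ℓ P (insert jj (I.erase i')) :=
          IH _ hμJ (insert jj (I.erase i')) hcardJ rfl
        have hx := exchange P hsmooth hcol hirr hi'er hjer hij hJ
        rwa [Finset.insert_erase hi'I] at hx
  exact fun I hc => main _ I hc rfl


end Stmt13
end
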